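/- arXiv:1612.06270 — 4 statements merged into one kernel-verified Lean document; each statement's English description precedes it below -/
import Mathlib

section
/- Let S be a semitopological semigroup and X a norm-closed linear subspace of ℓ∞(S) containing the constant functions and invariant under all left and right translations. Suppose that S acts on a nonempty weakly compact subset K of a Banach space E so that the action is weakly separately continuous and there exists y ∈ K such that for every weakly continuous complex-valued function f on K, the function s ↦ f(s·y) belongs to X. If X has a left invariant mean, then there exists a nonempty weakly compact and norm-separable subset K₀ of K such that sK₀ = {s·x : x ∈ K₀} = K₀ for every s ∈ S. -/
open scoped BoundedContinuousFunction

/-- A semitopological semigroup: a semigroup with a topology in which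
multiplication is separately continuous. -/
class SemitopoSemigroup (S : Type*) [Semigroup S] [TopologicalSpace S] : Prop where
  cont_left : ∀ t : S, Continuous fun s : S => t * s
  cont_right : ∀ t : S, Continuous fun s : S => s * t

section Ell

variable {S : Type*}

/-- Left translation: `(l_s f)(t) = f (s * t)`. -/
def lTrans [Mul S] (s : S) (f : S → ℂ) : S → ℂ := fun t => f (s * t)

/-- Right translation: `(r_s f)(t) = f (t * s)`. -/
def rTrans [Mul S] (s : S) (f : S → ℂ) : S → ℂ := fun t => f (t * s)

/-- A bounded complex-valued function, i.e. an element of `ℓ^∞(S)`. -/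
def BddFun (f : S → ℂ) : Prop := ∃ C : ℝ, ∀ t, ‖f t‖ ≤ C

/-- The supremum norm on `ℓ^∞(S)`. -/
noncomputable def supNorm (f : S → ℂ) : ℝ := ⨆ t, ‖f t‖

/-- `X` is a norm-closed linear subspace of `ℓ^∞(S)` containing the constants and
invariant under all left and right translations. -/
structure IsTransInvSubspace [Semigroup S] (X : Set (S → ℂ)) : Prop where
  bdd : ∀ f ∈ X, BddFun f
  add_mem : ∀ f ∈ X, ∀ g ∈ X, f + g ∈ X
  smul_mem : ∀ (c : ℂ), ∀ f ∈ X, c • f ∈ X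
  const_mem : ∀ c : ℂ, (fun _ : S => c) ∈ X
  normClosed : ∀ f : S → ℂ, BddFun f →
    (∀ ε > 0, ∃ g ∈ X, ∀ t, ‖f t - g t‖ ≤ ε) → f ∈ X
  lTrans_mem : ∀ (s : S), ∀ f ∈ X, lTrans s f ∈ X
  rTrans_mem : ∀ (s : S), ∀ f ∈ X, rTrans s f ∈ X

/-- `m` is a left invariant mean on `X`: a linear functional with `‖m‖ = m 1 = 1`
which is invariant under left translations. -/
structure IsLIM [Semigroup S] (X : Set (S → ℂ)) (m : (S → ℂ) → ℂ) : Prop where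
  add : ∀ f ∈ X, ∀ g ∈ X, m (f + g) = m f + m g
  smul : ∀ (c : ℂ), ∀ f ∈ X, m (c • f) = c * m f
  norm_le : ∀ f ∈ X, ‖m f‖ ≤ supNorm f
  map_one : m (fun _ : S => (1 : ℂ)) = 1
  left_inv : ∀ (s : S), ∀ f ∈ X, m (lTrans s f) = m f

/-- `X` has a left invariant mean. -/
def HasLIM [Semigroup S] (X : Set (S → ℂ)) : Prop := ∃ m, IsLIM X m

end Ell

/-- The weak topology on a normed space `E` over `𝕜`. -/
noncomputable def weakTop (𝕜 E : Type*) [NontriviallyNormedField 𝕜] [NormedAddCommGroup E]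
    [NormedSpace 𝕜 E] : TopologicalSpace E :=
  ⨅ φ : E →L[𝕜] 𝕜, TopologicalSpace.induced φ inferInstance

section Semitopo

variable {S : Type*} [Semigroup S] [TopologicalSpace S] [SemitopoSemigroup S]

/-- Left translation as a map on `C(S)`, the bounded continuous functions. -/
noncomputable def lTransB (s : S) (F : S →ᵇ ℂ) : S →ᵇ ℂ :=
  F.compContinuous ⟨fun t => s * t, SemitopoSemigroup.cont_left s⟩

/-- Right translation as a map on `C(S)`, the bounded continuous functions. -/
noncomputable def rTransB (s : S) (F : S →ᵇ ℂ) : S →ᵇ ℂ :=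
  F.compContinuous ⟨fun t => t * s, SemitopoSemigroup.cont_right s⟩

/-- `F ∈ C(S)` is weakly almost periodic: its left orbit is relatively compact in
the weak topology of `C(S)`. -/
def IsWAPb (F : S →ᵇ ℂ) : Prop :=
  @IsCompact _ (weakTop ℂ (S →ᵇ ℂ))
    (@closure _ (weakTop ℂ (S →ᵇ ℂ)) (Set.range fun s => lTransB s F))

/-- `F ∈ C(S)` is almost periodic: its left orbit is relatively compact in
the norm topology of `C(S)`. -/
def IsAPb (F : S →ᵇ ℂ) : Prop :=
  IsCompact (closure (Set.range fun s => lTransB s F))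

/-- `F ∈ C(S)` is left uniformly continuous: `s ↦ l_s F` is norm continuous. -/
def IsLUCb (F : S →ᵇ ℂ) : Prop := Continuous fun s => lTransB s F

/-- `WAP(S)` as a subset of `ℓ^∞(S)`. -/
def WAPset (S : Type*) [Semigroup S] [TopologicalSpace S] [SemitopoSemigroup S] :
    Set (S → ℂ) := {f | ∃ F : S →ᵇ ℂ, ⇑F = f ∧ IsWAPb F}

/-- `AP(S)` as a subset of `ℓ^∞(S)`. -/
def APset (S : Type*) [Semigroup S] [TopologicalSpace S] [SemitopoSemigroup S] :
    Set (S → ℂ) := {f | ∃ F : S →ᵇ ℂ, ⇑F = f ∧ IsAPb F}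

/-- `LUC(S)` as a subset of `ℓ^∞(S)`. -/
def LUCset (S : Type*) [Semigroup S] [TopologicalSpace S] [SemitopoSemigroup S] :
    Set (S → ℂ) := {f | ∃ F : S →ᵇ ℂ, ⇑F = f ∧ IsLUCb F}

end Semitopo

section Action

variable {S : Type*} {E : Type*} [NormedAddCommGroup E] [NormedSpace ℝ E]

/-- `act` is an action of the semigroup `S` on the set `K`. -/
def IsActionOn [Semigroup S] (act : S → E → E) (K : Set E) : Prop :=
  (∀ s : S, Set.MapsTo (act s) K K) ∧
    ∀ s s' : S, ∀ x ∈ K, act s (act s' x) = act (s * s') x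

/-- The action is nonexpansive on `K`. -/
def NonexpansiveOn (act : S → E → E) (K : Set E) : Prop :=
  ∀ s : S, ∀ x ∈ K, ∀ y ∈ K, ‖act s x - act s y‖ ≤ ‖x - y‖

/-- The action is weakly separately continuous on `K`. -/
def WeaklySepContOn [TopologicalSpace S] (act : S → E → E) (K : Set E) : Prop :=
  (∀ s : S, @ContinuousOn E E (weakTop ℝ E) (weakTop ℝ E) (act s) K) ∧
    (∀ x ∈ K, @Continuous S E _ (weakTop ℝ E) fun s => act s x)

/-- The action is jointly weakly continuous on `K`. -/
def JointlyWeaklyContOn [TopologicalSpace S] (act : S → E → E) (K : Set E) : Prop :=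
  @ContinuousOn (S × E) E (@instTopologicalSpaceProd S E _ (weakTop ℝ E)) (weakTop ℝ E)
    (fun p => act p.1 p.2) (Set.univ ×ˢ K)

/-- The action is weakly equicontinuous on `K`: the family `{x ↦ s • x : s ∈ S}` is
equicontinuous for the weak topology on `K`. -/
def WeaklyEquicontOn (act : S → E → E) (K : Set E) : Prop :=
  ∀ x ∈ K, ∀ W ∈ @nhds E (weakTop ℝ E) 0,
    ∃ U ∈ @nhdsWithin E (weakTop ℝ E) x K, ∀ y ∈ U, ∀ s : S, act s y - act s x ∈ W

/-- The action is weakly quasi-equicontinuous on `K`: every map in the closure of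
`{x ↦ s • x : s ∈ S}` in `K^K` (with `K` carrying the weak topology) is continuous. -/
def WeaklyQuasiEquicontOn (act : S → E → E) (K : Set E) : Prop :=
  ∀ T ∈ @closure (↥K → ↥K)
      (@Pi.topologicalSpace ↥K (fun _ => ↥K)
        (fun _ => TopologicalSpace.induced Subtype.val (weakTop ℝ E)))
      {F : ↥K → ↥K | ∃ s : S, ∀ x : ↥K, (F x : E) = act s x},
    @Continuous ↥K ↥K (TopologicalSpace.induced Subtype.val (weakTop ℝ E))
      (TopologicalSpace.induced Subtype.val (weakTop ℝ E)) T

end Action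

/-!
The left invariant mean, evaluated along the orbit of `y`, is a positive normalised functional
`μ` on the weakly continuous functions on `K`, invariant under every `x ↦ s • x`. Its support
`K₀` (the points at which every nonnegative function of mean zero vanishes) is weakly compact
and nonempty, and invariance of `μ` gives `s • K₀ = K₀`.

If `K₀` were not norm separable, a transfinite recursion over `ω₁` with Hahn–Banach would give
support points `x i` and functionals `ψ i` of norm at most `1` with `ψ i (x i) > 0`, each
vanishing at witnesses of all finite families of earlier bumps `{ψ j > ψ j (x j) / 2}`.
A Cauchy–Schwarz counting argument extracts a sequence `a` such that all finite products of the
bumps along `a` have positive mass; their witnesses `u n` satisfy `ψ (a i) (u n) = 0` for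
`n < i` and `ψ (a i) (u n) ≥ δ > 0` for `i ≤ n`, which a double limit along an ultrafilter
rules out for a weakly compact `K`.
-/

section WeakTopology

variable {E : Type*} [NormedAddCommGroup E] [NormedSpace ℝ E]

theorem continuous_weakTop (φ : E →L[ℝ] ℝ) : @Continuous E ℝ (weakTop ℝ E) _ φ :=
  continuous_iff_le_induced.2 (iInf_le _ φ)

theorem t2Space_weakTop : @T2Space E (weakTop ℝ E) := by
  refine @T2Space.mk E (weakTop ℝ E) fun x y hxy => ?_
  obtain ⟨φ, hφ⟩ := SeparatingDual.exists_separating_of_ne (R := ℝ) hxy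
  let _ := weakTop ℝ E
  exact separated_by_continuous (continuous_weakTop φ) hφ

theorem exists_dual_eq_zero_of_not_isSeparable {C M : Set E} (hC : C.Countable)
    (hM : ¬ TopologicalSpace.IsSeparable M) :
    ∃ x ∈ M, ∃ ψ : E →L[ℝ] ℝ, ‖ψ‖ ≤ 1 ∧ (∀ c ∈ C, ψ c = 0) ∧ 0 < ψ x := by
  let V := (Submodule.span ℝ C).topologicalClosure
  obtain ⟨x, hxM, hxV⟩ : ∃ x ∈ M, x ∉ V := by
    by_contra! h
    refine hM ((hC.isSeparable.span (R := ℝ)).closure.mono fun x hx => ?_)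
    rw [← Submodule.topologicalClosure_coe]
    exact h x hx
  have : IsClosed (V : Set E) := (Submodule.span ℝ C).isClosed_topologicalClosure
  have hx0 : (Submodule.Quotient.mk x : E ⧸ V) ≠ 0 := by
    rwa [Ne, Submodule.Quotient.mk_eq_zero]
  obtain ⟨g, hg1, hgx⟩ := exists_dual_vector ℝ _ (norm_ne_zero_iff.2 hx0)
  refine ⟨x, hxM, g.comp V.mkQL, ?_, fun c hc => ?_, ?_⟩
  · calc ‖g.comp V.mkQL‖ ≤ ‖g‖ * ‖V.mkQL‖ := ContinuousLinearMap.opNorm_comp_le _ _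
      _ ≤ 1 * 1 := by
        rw [hg1]
        gcongr
        exact ContinuousLinearMap.opNorm_le_bound _ zero_le_one fun z => by
          simpa using Submodule.Quotient.norm_mk_le V z
      _ = 1 := one_mul 1
  · have hc0 : V.mkQL c = 0 := by
      simpa [Submodule.Quotient.mk_eq_zero] using
        (Submodule.span ℝ C).le_topologicalClosure (Submodule.subset_span hc)
    simp [hc0]
  · simpa [hgx] using norm_pos_iff.2 hx0

open Filter Topology in
/-- Along a free ultrafilter, `lim_i lim_n ψ i (u n) ≥ δ` while `lim_n lim_i ψ i (u n) = 0`,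
but both equal `ψ₀ u₀` for the weak limit `u₀` of `u` and the weak-* limit `ψ₀` of `ψ`. -/
theorem exists_lt_apply_ne_zero {K : Set E} (hK : @IsCompact E (weakTop ℝ E) K)
    {u : ℕ → E} (hu : ∀ n, u n ∈ K) {ψ : ℕ → E →L[ℝ] ℝ} {R : ℝ} (hψ : ∀ i, ‖ψ i‖ ≤ R)
    {δ : ℝ} (hδ : 0 < δ) (hle : ∀ i n, i ≤ n → δ ≤ ψ i (u n)) :
    ∃ i n, n < i ∧ ψ i (u n) ≠ 0 := by
  by_contra! hzero
  let U := hyperfilter ℕ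
  have hU : ∀ n, ∀ᶠ i in (U : Filter ℕ), n < i := fun n =>
    hyperfilter_le_cofinite (Nat.cofinite_eq_atTop ▸ eventually_gt_atTop n)
  obtain ⟨u₀, -, hu₀⟩ := @IsCompact.ultrafilter_le_nhds E (weakTop ℝ E) K hK (U.map u)
    (by rw [Ultrafilter.coe_map, le_principal_iff, mem_map]; exact univ_mem' hu)
  rw [Ultrafilter.coe_map] at hu₀
  obtain ⟨ψ₀, -, hψ₀⟩ := (WeakDual.isCompact_closedBall (0 : StrongDual ℝ E) R).ultrafilter_le_nhds
    (U.map fun i => StrongDual.toWeakDual (ψ i)) (by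
      rw [Ultrafilter.coe_map, le_principal_iff, mem_map]
      exact univ_mem' fun i => by simpa using hψ i)
  rw [Ultrafilter.coe_map] at hψ₀
  have hψlim : ∀ z, Tendsto (fun i => ψ i z) U (𝓝 (ψ₀ z)) := fun z =>
    ((WeakDual.eval_continuous z).tendsto ψ₀).comp hψ₀
  have hulim : ∀ φ : E →L[ℝ] ℝ, Tendsto (fun n => φ (u n)) U (𝓝 (φ u₀)) := fun φ =>
    (@Continuous.tendsto E ℝ (weakTop ℝ E) _ φ (continuous_weakTop φ) u₀).comp hu₀
  have hψ₀u : ∀ n, ψ₀ (u n) = 0 := fun n => tendsto_nhds_unique (hψlim (u n))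
    (tendsto_const_nhds.congr' ((hU n).mono fun i hi => (hzero i n hi).symm))
  have h0 : ψ₀ u₀ = 0 := tendsto_nhds_unique (hulim (WeakDual.toStrongDual ψ₀))
    (by simp [hψ₀u])
  have hδ₀ : δ ≤ ψ₀ u₀ := ge_of_tendsto (hψlim u₀) (Eventually.of_forall fun i =>
    ge_of_tendsto (hulim (ψ i)) ((hU i).mono fun n hn => hle i n hn.le))
  linarith

end WeakTopology

section Mean

structure IsMeanOn {α : Type*} [TopologicalSpace α] (K : Set α) (μ : (α → ℝ) → ℝ) : Prop where
  map_add {f g : α → ℝ} : ContinuousOn f K → ContinuousOn g K → μ (f + g) = μ f + μ g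
  map_smul (c : ℝ) {f : α → ℝ} : ContinuousOn f K → μ (c • f) = c * μ f
  map_one : μ 1 = 1
  nonneg {f : α → ℝ} : ContinuousOn f K → (∀ x ∈ K, 0 ≤ f x) → 0 ≤ μ f

-- The topology is an implicit argument: these lemmas are applied to the weak topology of a
-- normed space, which is not its instance.
variable {α : Type*} {τ : TopologicalSpace α} {K : Set α} {μ : (α → ℝ) → ℝ}

namespace IsMeanOn

theorem map_const (hμ : IsMeanOn K μ) (c : ℝ) : μ (fun _ => c) = c := by
  have h := hμ.map_smul c (f := 1) continuousOn_const
  rw [hμ.map_one, mul_one] at h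
  convert h using 2
  ext
  simp

theorem map_sub (hμ : IsMeanOn K μ) {f g : α → ℝ} (hf : ContinuousOn f K)
    (hg : ContinuousOn g K) : μ (f - g) = μ f - μ g := by
  have h := hμ.map_add (hf.sub hg) hg
  rw [sub_add_cancel] at h
  linarith

theorem mono (hμ : IsMeanOn K μ) {f g : α → ℝ} (hf : ContinuousOn f K) (hg : ContinuousOn g K)
    (hfg : ∀ x ∈ K, f x ≤ g x) : μ f ≤ μ g := by
  have := hμ.nonneg (hg.sub hf) fun x hx => sub_nonneg.2 (hfg x hx)
  rw [hμ.map_sub hg hf] at this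
  linarith

theorem map_sum (hμ : IsMeanOn K μ) {ι : Type*} (s : Finset ι) {f : ι → α → ℝ}
    (hf : ∀ i ∈ s, ContinuousOn (f i) K) : μ (fun x => ∑ i ∈ s, f i x) = ∑ i ∈ s, μ (f i) := by
  classical
  induction s using Finset.induction_on with
  | empty => simpa using hμ.map_const 0
  | insert j s hj ih =>
    simp_rw [Finset.sum_insert hj]
    rw [← ih fun i hi => hf i (Finset.mem_insert_of_mem hi)]
    exact hμ.map_add (hf j (Finset.mem_insert_self j s))
      (continuousOn_finsetSum s fun i hi => hf i (Finset.mem_insert_of_mem hi))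

theorem exists_pos_of_pos (hμ : IsMeanOn K μ) {f : α → ℝ} (hf : ContinuousOn f K)
    (hpos : 0 < μ f) : ∃ x ∈ K, 0 < f x := by
  by_contra! h
  have := hμ.mono hf continuousOn_const h
  rw [hμ.map_const] at this
  linarith

theorem sq_le_mul (hμ : IsMeanOn K μ) {h g : α → ℝ} (hh : ContinuousOn h K)
    (hg : ContinuousOn g K) (hh0 : ∀ x ∈ K, 0 ≤ h x) :
    μ (h * g) ^ 2 ≤ μ h * μ (h * g * g) := by
  have hhg := hh.mul hg
  have hquad : ∀ t : ℝ, 0 ≤ μ h * (t * t) + 2 * μ (h * g) * t + μ (h * g * g) := by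
    intro t
    have hexpand : h * ((g + fun _ => t) * (g + fun _ => t))
        = h * g * g + ((2 * t) • (h * g) + (t * t) • h) := by
      ext x; simp only [Pi.mul_apply, Pi.add_apply, Pi.smul_apply, smul_eq_mul]; ring
    have hnn := hμ.nonneg (f := h * ((g + fun _ => t) * (g + fun _ => t)))
      (hh.mul ((hg.add continuousOn_const).mul (hg.add continuousOn_const)))
      fun x hx => mul_nonneg (hh0 x hx) (mul_self_nonneg _)
    rw [hexpand, hμ.map_add (hhg.mul hg) ((hhg.const_smul _).add (hh.const_smul _)),
      hμ.map_add (hhg.const_smul _) (hh.const_smul _), hμ.map_smul _ hhg,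
      hμ.map_smul _ hh] at hnn
    linarith
  have := discrim_le_zero hquad
  rw [discrim] at this
  nlinarith

end IsMeanOn

end Mean

section Support

/-- The support of the Radon measure representing `μ`. -/
def meanSupport {α : Type*} [TopologicalSpace α] (K : Set α) (μ : (α → ℝ) → ℝ) : Set α :=
  {x ∈ K | ∀ f : α → ℝ, ContinuousOn f K → (∀ z ∈ K, 0 ≤ f z) → μ f = 0 → f x = 0}

variable {α : Type*} {τ : TopologicalSpace α} {K : Set α} {μ : (α → ℝ) → ℝ}

theorem meanSupport_subset : meanSupport K μ ⊆ K := fun _ hx => hx.1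

theorem isCompact_meanSupport [T2Space α] (hK : IsCompact K) :
    IsCompact (meanSupport K μ) := by
  let N := {f : α → ℝ | ContinuousOn f K ∧ (∀ z ∈ K, 0 ≤ f z) ∧ μ f = 0}
  have hN : meanSupport K μ = K ∩ ⋂ f ∈ N, K ∩ f ⁻¹' {0} := by
    ext x
    simp only [meanSupport, N, Set.mem_ofPred_eq, Set.mem_inter_iff, Set.mem_iInter,
      Set.mem_preimage, Set.mem_singleton_iff]
    exact ⟨fun ⟨hx, h⟩ => ⟨hx, fun f hf => ⟨hx, h f hf.1 hf.2.1 hf.2.2⟩⟩,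
      fun ⟨hx, h⟩ => ⟨hx, fun f hf h0 hμ => (h f ⟨hf, h0, hμ⟩).2⟩⟩
  rw [hN]
  exact hK.of_isClosed_subset (hK.isClosed.inter (isClosed_biInter fun f hf =>
    hf.1.preimage_isClosed_of_isClosed hK.isClosed isClosed_singleton)) Set.inter_subset_left

namespace IsMeanOn

theorem pos_of_mem_meanSupport (hμ : IsMeanOn K μ) {x : α} (hx : x ∈ meanSupport K μ)
    {f : α → ℝ} (hf : ContinuousOn f K) (hf0 : ∀ z ∈ K, 0 ≤ f z) (hfx : 0 < f x) : 0 < μ f :=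
  (hμ.nonneg hf hf0).lt_of_ne fun h => hfx.ne' (hx.2 f hf hf0 h.symm)

theorem exists_ge_one_of_disjoint (hμ : IsMeanOn K μ) {C : Set α} (hC : IsCompact C)
    (hCK : C ⊆ K) (hdisj : Disjoint C (meanSupport K μ)) :
    ∃ F : α → ℝ, ContinuousOn F K ∧ (∀ z ∈ K, 0 ≤ F z) ∧ μ F = 0 ∧ ∀ z ∈ C, 1 ≤ F z := by
  suffices ∃ F : α → ℝ, ContinuousOn F K ∧ (∀ z ∈ K, 0 ≤ F z) ∧ μ F = 0 ∧ ∀ z ∈ C ∩ K, 1 ≤ F z by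
    obtain ⟨F, hF, hF0, hFμ, hF1⟩ := this
    exact ⟨F, hF, hF0, hFμ, fun z hz => hF1 z ⟨hz, hCK hz⟩⟩
  refine hC.induction_on (p := fun s => ∃ F : α → ℝ, ContinuousOn F K ∧ (∀ z ∈ K, 0 ≤ F z) ∧
      μ F = 0 ∧ ∀ z ∈ s ∩ K, 1 ≤ F z) ?_ ?_ ?_ ?_
  · refine ⟨fun _ => 0, continuousOn_const, fun _ _ => le_rfl, hμ.map_const 0, ?_⟩
    simp
  · exact fun s t hst ⟨F, hF, hF0, hFμ, hF1⟩ =>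
      ⟨F, hF, hF0, hFμ, fun z hz => hF1 z ⟨hst hz.1, hz.2⟩⟩
  · rintro s t ⟨F, hF, hF0, hFμ, hF1⟩ ⟨G, hG, hG0, hGμ, hG1⟩
    refine ⟨F + G, hF.add hG, fun z hz => add_nonneg (hF0 z hz) (hG0 z hz), ?_, ?_⟩
    · rw [hμ.map_add hF hG, hFμ, hGμ, add_zero]
    · rintro z ⟨hz | hz, hzK⟩
      · exact le_add_of_le_of_nonneg (hF1 z ⟨hz, hzK⟩) (hG0 z hzK)
      · exact le_add_of_nonneg_of_le (hF0 z hzK) (hG1 z ⟨hz, hzK⟩)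
  · intro x hxC
    have hxK := hCK hxC
    have hx : x ∉ meanSupport K μ := Set.disjoint_left.1 hdisj hxC
    simp only [meanSupport, Set.mem_ofPred_eq, hxK, true_and, not_forall] at hx
    obtain ⟨f, hf, hf0, hfμ, hfx⟩ := hx
    have hfx : 0 < f x := (hf0 x hxK).lt_of_ne' hfx
    refine ⟨{z | f x / 2 < f z}, ?_, (2 / f x) • f, hf.const_smul _,
      fun z hz => mul_nonneg (by positivity) (hf0 z hz), by rw [hμ.map_smul _ hf, hfμ, mul_zero],
      fun z hz => ?_⟩
    · exact nhdsWithin_mono x hCK ((hf x hxK).eventually_const_lt (by linarith))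
    · rw [Pi.smul_apply, smul_eq_mul, div_mul_eq_mul_div, le_div_iff₀ hfx]
      linarith [hz.1.out]

theorem map_eq_zero_of_eq_zero_on_meanSupport [T2Space α] (hμ : IsMeanOn K μ)
    (hK : IsCompact K) {f : α → ℝ} (hf : ContinuousOn f K) (hf0 : ∀ z ∈ K, 0 ≤ f z)
    (hfs : ∀ z ∈ meanSupport K μ, f z = 0) : μ f = 0 := by
  obtain ⟨M, hM⟩ := hK.exists_bound_of_continuousOn hf
  refine le_antisymm (le_of_forall_pos_le_add fun ε hε => ?_) (hμ.nonneg hf hf0)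
  have hC : IsCompact (K ∩ f ⁻¹' Set.Ici ε) := hK.of_isClosed_subset
    (hf.preimage_isClosed_of_isClosed hK.isClosed isClosed_Ici) Set.inter_subset_left
  obtain ⟨F, hF, hF0, hFμ, hF1⟩ := hμ.exists_ge_one_of_disjoint hC Set.inter_subset_left
    (Set.disjoint_left.2 fun z hz hzs => by linarith [hfs z hzs, show ε ≤ f z from hz.2])
  have hdom : ∀ z ∈ K, f z ≤ ((fun _ => ε) + M • F : α → ℝ) z := by
    intro z hz
    have hMz : f z ≤ M := (le_abs_self _).trans (hM z hz)
    have hM0 : 0 ≤ M := (norm_nonneg _).trans (hM z hz)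
    simp only [Pi.add_apply, Pi.smul_apply, smul_eq_mul]
    by_cases hεz : ε ≤ f z
    · nlinarith [hF1 z ⟨hz, hεz⟩]
    · nlinarith [hF0 z hz]
  calc μ f ≤ μ ((fun _ => ε) + M • F : α → ℝ) :=
        hμ.mono hf (continuousOn_const.add (hF.const_smul M)) hdom
    _ = 0 + ε := by
      rw [hμ.map_add continuousOn_const (hF.const_smul M), hμ.map_const, hμ.map_smul M hF, hFμ]
      ring

end IsMeanOn

theorem meanSupport_nonempty [T2Space α] (hK : IsCompact K) (hμ : IsMeanOn K μ) :
    (meanSupport K μ).Nonempty := by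
  by_contra h
  have h1 := hμ.map_eq_zero_of_eq_zero_on_meanSupport hK continuousOn_const
    (fun _ _ => zero_le_one) fun z hz => (h ⟨z, hz⟩).elim
  rw [hμ.map_const] at h1
  exact one_ne_zero h1

theorem IsCompact.exists_continuousOn_eq_one [T2Space α] (hK : IsCompact K) {B : Set α}
    (hB : IsClosed B) {x : α} (hx : x ∈ K) (hxB : x ∉ B) :
    ∃ f : α → ℝ, ContinuousOn f K ∧ (∀ z ∈ K, 0 ≤ f z) ∧ f x = 1 ∧ ∀ z ∈ K ∩ B, f z = 0 := by
  classical
  have : CompactSpace K := isCompact_iff_compactSpace.mp hK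
  obtain ⟨f, hfB, hfx, hf01⟩ := exists_continuous_zero_one_of_isClosed
    (hB.preimage continuous_subtype_val) (isClosed_singleton (x := (⟨x, hx⟩ : K)))
    (Set.disjoint_singleton_right.2 hxB)
  refine ⟨fun z => if hz : z ∈ K then f ⟨z, hz⟩ else 0, ?_, fun z hz => ?_, ?_, fun z hz => ?_⟩
  · refine continuousOn_iff_continuous_domRestrict.2 ?_
    convert f.continuous with z
    simp
  · simpa [hz] using (hf01 _).1
  · simpa [hx] using hfx rfl
  · simpa [hz.1] using hfB hz.2

theorem image_meanSupport [T2Space α] (hK : IsCompact K) (hμ : IsMeanOn K μ) {T : α → α}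
    (hT : ContinuousOn T K) (hTK : Set.MapsTo T K K)
    (hμT : ∀ f : α → ℝ, ContinuousOn f K → μ (f ∘ T) = μ f) :
    T '' meanSupport K μ = meanSupport K μ := by
  refine Set.Subset.antisymm (Set.image_subset_iff.2 fun x hx => ⟨hTK hx.1, ?_⟩) fun x hx => ?_
  · exact fun f hf hf0 hfμ => hx.2 (f ∘ T) (hf.comp hT hTK) (fun z hz => hf0 _ (hTK hz))
      ((hμT f hf).trans hfμ)
  by_contra hxT
  have hc : IsCompact (T '' meanSupport K μ) :=
    (isCompact_meanSupport hK).image_of_continuousOn (hT.mono meanSupport_subset)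
  obtain ⟨f, hf, hf0, hfx, hfT⟩ := hK.exists_continuousOn_eq_one hc.isClosed hx.1 hxT
  have hfT0 : μ (f ∘ T) = 0 := hμ.map_eq_zero_of_eq_zero_on_meanSupport hK (hf.comp hT hTK)
    (fun z hz => hf0 _ (hTK hz)) fun z hz => hfT _ ⟨hTK hz.1, z, hz, rfl⟩
  exact one_ne_zero (hfx ▸ hx.2 f hf hf0 ((hμT f hf).symm.trans hfT0))

end Support

section LeftInvariantMean

variable {S : Type*} [Semigroup S] {X : Set (S → ℂ)} {m : (S → ℂ) → ℂ}

namespace IsLIM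

theorem map_const (hm : IsLIM X m) (h1 : (fun _ => (1 : ℂ)) ∈ X) (c : ℂ) :
    m (fun _ => c) = c := by
  have h := hm.smul c _ h1
  rw [hm.map_one, mul_one] at h
  convert h using 2
  ext
  simp

theorem nonempty (hm : IsLIM X m) (h1 : (fun _ => (1 : ℂ)) ∈ X) : Nonempty S := by
  by_contra hS
  have : IsEmpty S := not_nonempty_iff.1 hS
  have h := hm.norm_le _ h1
  rw [hm.map_one, supNorm, Real.iSup_of_isEmpty] at h
  norm_num at h

/-- `|m g - B/2| ≤ ‖g - B/2‖∞ ≤ B/2` whenever `0 ≤ g ≤ B`. -/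
theorem re_nonneg [Nonempty S] (hm : IsLIM X m) (hc : ∀ c : ℂ, (fun _ => c) ∈ X)
    {g : S → ℝ} {B : ℝ} (hg : ∀ s, g s ∈ Set.Icc 0 B)
    (hgB : (fun s => ((g s - B / 2 : ℝ) : ℂ)) ∈ X) : 0 ≤ (m fun s => (g s : ℂ)).re := by
  have hsplit : m (fun s => (g s : ℂ)) = m (fun s => ((g s - B / 2 : ℝ) : ℂ)) + (B / 2 : ℝ) := by
    rw [← hm.map_const (hc 1) ((B / 2 : ℝ) : ℂ), ← hm.add _ hgB _ (hc _)]
    congr 1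
    ext s
    simp
  have hnorm : ‖m fun s => ((g s - B / 2 : ℝ) : ℂ)‖ ≤ B / 2 := by
    refine (hm.norm_le _ hgB).trans (ciSup_le fun s => ?_)
    rw [Complex.norm_real, Real.norm_eq_abs, abs_le]
    constructor <;> linarith [(hg s).1, (hg s).2]
  rw [hsplit, Complex.add_re, Complex.ofReal_re]
  linarith [Complex.abs_re_le_norm (m fun s => ((g s - B / 2 : ℝ) : ℂ)),
    neg_abs_le (m fun s => ((g s - B / 2 : ℝ) : ℂ)).re]

end IsLIM

variable {α : Type*}

noncomputable def orbitMean (m : (S → ℂ) → ℂ) (o : S → α) (f : α → ℝ) : ℝ :=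
  (m fun s => (f (o s) : ℂ)).re

theorem isMeanOn_orbitMean {τ : TopologicalSpace α} (hm : IsLIM X m) {K : Set α}
    (hK : IsCompact K) {o : S → α} (ho : ∀ s, o s ∈ K)
    (hX : ∀ f : α → ℂ, ContinuousOn f K → (fun s => f (o s)) ∈ X) :
    IsMeanOn K (orbitMean m o) := by
  have hR : ∀ f : α → ℝ, ContinuousOn f K → (fun s => (f (o s) : ℂ)) ∈ X :=
    fun f hf => hX _ (Complex.continuous_ofReal.comp_continuousOn hf)
  have hc : ∀ c : ℂ, (fun _ : S => c) ∈ X := fun c => hX _ continuousOn_const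
  have := hm.nonempty (hc 1)
  refine ⟨fun {f g} hf hg => ?_, fun c f hf => ?_, ?_, fun {f} hf hf0 => ?_⟩
  · rw [orbitMean, orbitMean, orbitMean, ← Complex.add_re, ← hm.add _ (hR f hf) _ (hR g hg)]
    congr 2
    ext s
    simp
  · rw [orbitMean, orbitMean, ← Complex.re_ofReal_mul, ← hm.smul _ _ (hR f hf)]
    congr 2
    ext s
    simp
  · simp only [orbitMean, Pi.one_apply, Complex.ofReal_one, hm.map_one, Complex.one_re]
  · obtain ⟨B, hB⟩ := hK.exists_bound_of_continuousOn hf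
    exact hm.re_nonneg hc (fun s => ⟨hf0 _ (ho s), (le_abs_self _).trans (hB _ (ho s))⟩)
      (hR _ (hf.sub continuousOn_const))

theorem orbitMean_comp (hm : IsLIM X m) {o : S → α} {T : α → α} {t : S}
    (hT : ∀ s, T (o s) = o (t * s)) {f : α → ℝ} (hf : (fun s => (f (o s) : ℂ)) ∈ X) :
    orbitMean m o (f ∘ T) = orbitMean m o f := by
  simp only [orbitMean, Function.comp_apply, hT]
  rw [← hm.left_inv t _ hf]
  rfl

end LeftInvariantMean

section Uncountable

variable {ι : Type*}

theorem exists_pos_not_countable_le {A : Set ι} (hA : ¬ A.Countable) {v : ι → ℝ}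
    (hv : ∀ i ∈ A, 0 < v i) : ∃ ε > 0, ¬ {i ∈ A | ε ≤ v i}.Countable := by
  by_contra! h
  refine hA ((Set.countable_iUnion fun n : ℕ => h (1 / (n + 1)) (by positivity)).mono
    fun i hi => ?_)
  obtain ⟨n, hn⟩ := exists_nat_one_div_lt (hv i hi)
  exact Set.mem_iUnion.2 ⟨n, hi, hn.le⟩

theorem exists_finset_pairwise_not {A : Set ι} (hA : ¬ A.Countable) {r : ι → ι → Prop}
    (hr : ∀ i j, r i j → r j i) (hcount : ∀ i ∈ A, {j ∈ A | r i j}.Countable) (n : ℕ) :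
    ∃ s : Finset ι, ↑s ⊆ A ∧ s.card = n ∧ (s : Set ι).Pairwise fun i j => ¬ r i j := by
  classical
  induction n with
  | zero => exact ⟨∅, by simp, rfl, by simp⟩
  | succ n ih =>
    obtain ⟨s, hsA, hcard, hs⟩ := ih
    have hrest : ¬ (A \ (↑s ∪ ⋃ i ∈ s, {j ∈ A | r i j})).Countable := fun h =>
      hA (h.of_sdiff (s.countable_toSet.union
        (s.countable_toSet.biUnion fun i hi => hcount i (hsA hi))))
    obtain ⟨j, hjA, hj⟩ := Set.nonempty_iff_ne_empty.2 fun h => hrest (h ▸ Set.countable_empty :)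
    simp only [Set.mem_union, Finset.mem_coe, Set.mem_iUnion, Set.mem_ofPred_eq, not_or,
      not_exists] at hj
    refine ⟨insert j s, by simpa [Set.insert_subset_iff] using ⟨hjA, hsA⟩,
      by rw [Finset.card_insert_of_notMem hj.1, hcard], ?_⟩
    rw [Finset.coe_insert]
    exact hs.insert fun i hi _ =>
      ⟨fun hji => hj.2 i hi ⟨hjA, hr j i hji⟩, fun hij => hj.2 i hi ⟨hjA, hij⟩⟩

theorem exists_strictMono_of_forall_exists_insert [LinearOrder ι] {A : Set ι}
    {Good : Finset ι → Prop} (h0 : Good ∅)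
    (hstep : ∀ F, Good F → ∃ γ ∈ A, (∀ i ∈ F, i < γ) ∧ Good (insert γ F)) :
    ∃ a : ℕ → ι, StrictMono a ∧ (∀ n, a n ∈ A) ∧ ∀ n, Good ((Finset.range n).image a) := by
  classical
  have : Nonempty ι := let ⟨γ, _⟩ := hstep ∅ h0; ⟨γ⟩
  choose! next hnextA hnext_gt hnext_good using hstep
  let F : ℕ → Finset ι := fun n => Nat.rec ∅ (fun _ F => insert (next F) F) n
  have hF : ∀ n, Good (F n) := fun n => by
    induction n with
    | zero => exact h0
    | succ n ih => exact hnext_good _ ih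
  let a : ℕ → ι := fun n => next (F n)
  have hFa : ∀ n, F n = (Finset.range n).image a := fun n => by
    induction n with
    | zero => rfl
    | succ n ih => rw [Finset.range_add_one, Finset.image_insert, ← ih]
  refine ⟨a, strictMono_nat_of_lt_succ fun n => hnext_gt _ (hF (n + 1)) _ ?_,
    fun n => hnextA _ (hF n), fun n => hFa n ▸ hF n⟩
  rw [hFa (n + 1)]
  exact Finset.mem_image_of_mem a (Finset.self_mem_range_succ n)

theorem exists_forall_image_Iio {ι β : Type*} [Preorder ι] [WellFoundedLT ι]
    (P : Set β → β → Prop) (h : ∀ (i : ι) (g : Set.Iio i → β), ∃ b, P (Set.range g) b) :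
    ∃ g : ι → β, ∀ i, P (g '' Set.Iio i) (g i) := by
  choose next hnext using h
  let g : ι → β := wellFounded_lt.fix fun i rec => next i fun j => rec j j.2
  refine ⟨g, fun i => ?_⟩
  rw [show g i = next i fun j => g j from wellFounded_lt.fix_eq _ i, Set.image_eq_range]
  exact hnext i _

theorem not_countable_univ_toType_ord_aleph_one :
    ¬ (Set.univ : Set (Cardinal.aleph.{0} 1).ord.ToType).Countable := by
  rw [← Cardinal.le_aleph0_iff_set_countable, Cardinal.mk_univ, not_le]
  simp

theorem countable_Iio_toType_ord_aleph_one (i : (Cardinal.aleph.{0} 1).ord.ToType) :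
    (Set.Iio i).Countable := by
  have h := Cardinal.mk_Iio_lt i (by simp)
  rw [Cardinal.mk_toType, Cardinal.card_ord, Cardinal.lt_aleph_one_iff] at h
  exact Cardinal.le_aleph0_iff_set_countable.1 h

end Uncountable

section Extraction

variable {α : Type*} {τ : TopologicalSpace α} {K : Set α} {μ : (α → ℝ) → ℝ} {ι : Type*}
  {f : ι → α → ℝ}

namespace IsMeanOn

/-- Cauchy–Schwarz against `h` for `g = ∑ i ∈ s, f i`, whose cross terms vanish, gives
`μ (h * g) ≤ μ h`. -/
theorem card_mul_le (hμ : IsMeanOn K μ) (hf : ∀ i, ContinuousOn (f i) K)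
    (hf01 : ∀ i, ∀ z ∈ K, f i z ∈ Set.Icc 0 1) {h : α → ℝ} (hh : ContinuousOn h K)
    (hh0 : ∀ z ∈ K, 0 ≤ h z) {s : Finset ι} {D : ℝ} (hD : ∀ i ∈ s, D ≤ μ (h * f i))
    (hnull : (s : Set ι).Pairwise fun i j => μ (h * f i * f j) = 0) :
    s.card * D ≤ μ h := by
  set g : α → ℝ := fun z => ∑ i ∈ s, f i z
  have hg : ContinuousOn g K := continuousOn_finsetSum _ fun i _ => hf i
  have hb : μ (h * g) = ∑ i ∈ s, μ (h * f i) := by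
    rw [← hμ.map_sum s fun i _ => hh.mul (hf i)]
    congr 1
    ext z
    simp [g, Finset.mul_sum]
  have hc : μ (h * g * g) = ∑ i ∈ s, μ (h * f i * f i) := by
    have hgg : h * g * g = fun z => ∑ i ∈ s, ∑ j ∈ s, (h * f i * f j) z := by
      ext z
      simp only [Pi.mul_apply, g, Finset.mul_sum, Finset.sum_mul]
      rw [Finset.sum_comm]
    rw [hgg, hμ.map_sum s fun i _ => continuousOn_finsetSum _ fun j _ => (hh.mul (hf i)).mul (hf j)]
    refine Finset.sum_congr rfl fun i hi => ?_
    rw [hμ.map_sum s fun j _ => (hh.mul (hf i)).mul (hf j)]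
    exact Finset.sum_eq_single_of_mem i hi fun j hj hji => hnull hi hj hji.symm
  have hcb : μ (h * g * g) ≤ μ (h * g) := by
    rw [hc, hb]
    refine Finset.sum_le_sum fun i _ => hμ.mono ((hh.mul (hf i)).mul (hf i)) (hh.mul (hf i))
      fun z hz => ?_
    exact mul_le_of_le_one_right (mul_nonneg (hh0 z hz) (hf01 i z hz).1) (hf01 i z hz).2
  have hsD : s.card * D ≤ μ (h * g) := by
    rw [hb]
    simpa using Finset.card_nsmul_le_sum s _ D hD
  have hcs := hμ.sq_le_mul hh hg hh0
  have hμh := hμ.nonneg hh hh0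
  by_cases hpos : 0 < μ (h * g)
  · nlinarith
  · linarith

theorem exists_not_countable_mul_ge [LinearOrder ι] (hμ : IsMeanOn K μ)
    (hf : ∀ i, ContinuousOn (f i) K) (hf01 : ∀ i, ∀ z ∈ K, f i z ∈ Set.Icc 0 1)
    (hIic : ∀ i : ι, (Set.Iic i).Countable) {A : Set ι} (hA : ¬ A.Countable) {h : α → ℝ}
    (hh : ContinuousOn h K) (hh0 : ∀ z ∈ K, 0 ≤ h z) {D : ℝ} (hD : 0 < D)
    (hAD : ∀ β ∈ A, D ≤ μ (h * f β)) :
    ∃ γ ∈ A, ∃ B ⊆ A, ¬ B.Countable ∧ (∀ β ∈ B, γ < β) ∧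
      ∃ D' > 0, ∀ β ∈ B, D' ≤ μ (h * f γ * f β) := by
  have hnn : ∀ γ β, 0 ≤ μ (h * f γ * f β) := fun γ β =>
    hμ.nonneg ((hh.mul (hf γ)).mul (hf β)) fun z hz =>
      mul_nonneg (mul_nonneg (hh0 z hz) (hf01 γ z hz).1) (hf01 β z hz).1
  obtain ⟨γ, hγA, hγ⟩ : ∃ γ ∈ A, ¬ {β ∈ A | 0 < μ (h * f γ * f β)}.Countable := by
    by_contra! hcount
    obtain ⟨s, hsA, hcard, hs⟩ := exists_finset_pairwise_not hA
      (r := fun γ β => 0 < μ (h * f γ * f β)) (fun γ β hγβ => by rwa [mul_right_comm] at hγβ)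
      hcount (⌈μ h / D⌉₊ + 1)
    have hle := hμ.card_mul_le hf hf01 hh hh0 (fun i hi => hAD i (hsA hi))
      (hs.imp fun γ β hγβ => le_antisymm (not_lt.1 hγβ) (hnn γ β))
    rw [hcard, Nat.cast_add, Nat.cast_one] at hle
    have := (div_le_iff₀ hD).1 (Nat.le_ceil (μ h / D))
    nlinarith
  obtain ⟨D', hD', hB⟩ := exists_pos_not_countable_le
    (A := {β ∈ A | 0 < μ (h * f γ * f β)} \ Set.Iic γ) (fun h' => hγ (h'.of_sdiff (hIic γ)))
    fun β hβ => hβ.1.2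
  exact ⟨γ, hγA, _, fun β hβ => hβ.1.1.1, hB, fun β hβ => not_le.1 hβ.1.2, D', hD',
    fun β hβ => hβ.2⟩

theorem exists_strictMono_prod_pos [LinearOrder ι] (hμ : IsMeanOn K μ)
    (hf : ∀ i, ContinuousOn (f i) K) (hf01 : ∀ i, ∀ z ∈ K, f i z ∈ Set.Icc 0 1)
    (hIic : ∀ i : ι, (Set.Iic i).Countable) {A : Set ι} (hA : ¬ A.Countable) {ε : ℝ}
    (hε : 0 < ε) (hAε : ∀ i ∈ A, ε ≤ μ (f i)) :
    ∃ a : ℕ → ι, StrictMono a ∧ (∀ n, a n ∈ A) ∧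
      ∀ n, 0 < μ (fun z => ∏ k ∈ Finset.range n, f (a k) z) := by
  classical
  let P : Finset ι → α → ℝ := fun F z => ∏ i ∈ F, f i z
  have hP : ∀ F, ContinuousOn (P F) K := fun F => continuousOn_finsetProd F fun i _ => hf i
  have hP0 : ∀ F, ∀ z ∈ K, 0 ≤ P F z := fun F z hz =>
    Finset.prod_nonneg fun i _ => (hf01 i z hz).1
  let Good : Finset ι → Prop := fun F => ∃ B ⊆ A, ¬ B.Countable ∧ (∀ β ∈ B, ∀ i ∈ F, i < β) ∧
    ∃ D > 0, ∀ β ∈ B, D ≤ μ (P F * f β)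
  have hgood0 : Good ∅ := ⟨A, subset_rfl, hA, by simp, ε, hε, fun β hβ => by
    convert hAε β hβ using 2
    ext z
    simp [P]⟩
  have hstep : ∀ F, Good F → ∃ γ ∈ A, (∀ i ∈ F, i < γ) ∧ Good (insert γ F) := by
    rintro F ⟨B, hBA, hB, hBF, D, hD, hBD⟩
    obtain ⟨γ, hγB, B', hB'B, hB', hB'γ, D', hD', hB'D⟩ :=
      hμ.exists_not_countable_mul_ge hf hf01 hIic hB (hP F) (hP0 F) hD hBD
    have hγF : γ ∉ F := fun h => lt_irrefl γ (hBF γ hγB γ h)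
    have hins : P (insert γ F) = P F * f γ := by
      ext z
      simp [P, Finset.prod_insert hγF, mul_comm]
    refine ⟨γ, hBA hγB, hBF γ hγB, B', hB'B.trans hBA, hB', fun β hβ i hi => ?_, D', hD',
      fun β hβ => hins ▸ hB'D β hβ⟩
    rcases Finset.mem_insert.1 hi with rfl | hi
    · exact hB'γ β hβ
    · exact hBF β (hB'B hβ) i hi
  obtain ⟨a, ha, haA, hgood⟩ := exists_strictMono_of_forall_exists_insert hgood0 hstep
  refine ⟨a, ha, haA, fun n => ?_⟩
  obtain ⟨B, -, hB, -, D, hD, hBD⟩ := hgood n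
  obtain ⟨β, hβ⟩ := (show B.Infinite from fun h => hB h.countable).nonempty
  have hmass := hD.trans_le ((hBD β hβ).trans (hμ.mono ((hP _).mul (hf β)) (hP _) fun z hz =>
    mul_le_of_le_one_right (hP0 _ z hz) (hf01 β z hz).2))
  simpa only [P, Finset.prod_image ha.injective.injOn] using hmass

end IsMeanOn

end Extraction

section Separability

variable {E : Type*} [NormedAddCommGroup E] [NormedSpace ℝ E]

/-- A probe `(ψ, x)` is a functional together with a support point at which it is positive. -/
noncomputable def probeBump (p : (E →L[ℝ] ℝ) × E) (z : E) : ℝ :=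
  min 1 (max 0 (p.1 z - p.1 p.2 / 2))

theorem probeBump_mem_Icc (p : (E →L[ℝ] ℝ) × E) (z : E) : probeBump p z ∈ Set.Icc 0 1 :=
  ⟨le_min zero_le_one (le_max_left _ _), min_le_left _ _⟩

theorem probeBump_pos_iff {p : (E →L[ℝ] ℝ) × E} {z : E} :
    0 < probeBump p z ↔ p.1 p.2 / 2 < p.1 z := by
  simp [probeBump]

theorem continuous_probeBump (p : (E →L[ℝ] ℝ) × E) :
    @Continuous E ℝ (weakTop ℝ E) _ (probeBump p) := by
  let _ := weakTop ℝ E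
  exact continuous_const.min (continuous_const.max ((continuous_weakTop p.1).sub continuous_const))

/-- A point of `K` at which all bumps of `G` are positive, if there is one. -/
noncomputable def probeWitness (K : Set E) (G : Finset ((E →L[ℝ] ℝ) × E)) : E :=
  Classical.epsilon fun w => w ∈ K ∧ ∀ p ∈ G, 0 < probeBump p w

variable {K : Set E} {μ : (E → ℝ) → ℝ}

theorem probeWitness_spec {G : Finset ((E →L[ℝ] ℝ) × E)}
    (h : ∃ w ∈ K, ∀ p ∈ G, 0 < probeBump p w) :
    probeWitness K G ∈ K ∧ ∀ p ∈ G, 0 < probeBump p (probeWitness K G) := by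
  obtain ⟨w, hw⟩ := h
  exact Classical.epsilon_spec (p := fun w => w ∈ K ∧ ∀ p ∈ G, 0 < probeBump p w) ⟨w, hw⟩

theorem probeWitness_spec_of_prod_pos (hμ : @IsMeanOn E (weakTop ℝ E) K μ) {κ : Type*}
    [DecidableEq ((E →L[ℝ] ℝ) × E)] {q : κ → (E →L[ℝ] ℝ) × E} {s : Finset κ}
    (hpos : 0 < μ fun z => ∏ k ∈ s, probeBump (q k) z) :
    probeWitness K (s.image q) ∈ K ∧ ∀ k ∈ s, 0 < probeBump (q k) (probeWitness K (s.image q)) := by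
  have hprod : @ContinuousOn E ℝ (weakTop ℝ E) _ (fun z => ∏ k ∈ s, probeBump (q k) z) K := by
    let _ := weakTop ℝ E
    exact continuousOn_finsetProd _ fun k _ => (continuous_probeBump (q k)).continuousOn
  obtain ⟨z, hzK, hz⟩ := hμ.exists_pos_of_pos hprod hpos
  obtain ⟨hwK, hw⟩ := probeWitness_spec ⟨z, hzK, fun p hp => by
    obtain ⟨k, hk, rfl⟩ := Finset.mem_image.1 hp
    exact (probeBump_mem_Icc _ z).1.lt_of_ne' (Finset.prod_ne_zero_iff.1 hz.ne' k hk)⟩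
  exact ⟨hwK, fun k hk => hw _ (Finset.mem_image_of_mem q hk)⟩

def IsFreshProbe (K : Set E) (μ : (E → ℝ) → ℝ) (Prev : Set ((E →L[ℝ] ℝ) × E))
    (q : (E →L[ℝ] ℝ) × E) : Prop :=
  q.2 ∈ @meanSupport E (weakTop ℝ E) K μ ∧ ‖q.1‖ ≤ 1 ∧ 0 < q.1 q.2 ∧
    ∀ G : Finset ((E →L[ℝ] ℝ) × E), ↑G ⊆ Prev → q.1 (probeWitness K G) = 0

theorem exists_isFreshProbe_of_not_isSeparable {ι : Type*} [LinearOrder ι] [WellFoundedLT ι]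
    (hIio : ∀ i : ι, (Set.Iio i).Countable)
    (hns : ¬ TopologicalSpace.IsSeparable (@meanSupport E (weakTop ℝ E) K μ)) :
    ∃ p : ι → (E →L[ℝ] ℝ) × E, ∀ i, IsFreshProbe K μ (p '' Set.Iio i) (p i) := by
  refine exists_forall_image_Iio (IsFreshProbe K μ) fun i g => ?_
  have : Countable (Set.Iio i) := (hIio i).to_subtype
  have hfin : {G : Finset ((E →L[ℝ] ℝ) × E) | ↑G ⊆ Set.range g}.Countable :=
    ((Set.countable_ofPred_finite_subset (Set.countable_range g)).preimage
      Finset.coe_injective).mono fun G hG => show _ ∧ _ from ⟨G.finite_toSet, hG⟩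
  have hC := hfin.image (probeWitness K)
  obtain ⟨x, hx, ψ, hψ1, hψC, hψx⟩ := exists_dual_eq_zero_of_not_isSeparable hC hns
  exact ⟨(ψ, x), hx, hψ1, hψx, fun G hG => hψC _ ⟨G, hG, rfl⟩⟩

theorem isSeparable_meanSupport (hK : @IsCompact E (weakTop ℝ E) K)
    (hμ : @IsMeanOn E (weakTop ℝ E) K μ) :
    TopologicalSpace.IsSeparable (@meanSupport E (weakTop ℝ E) K μ) := by
  classical
  by_contra hns
  let ι := (Cardinal.aleph.{0} 1).ord.ToType
  have hIic : ∀ i : ι, (Set.Iic i).Countable := fun i => by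
    rw [← Set.Iio_insert]
    exact (countable_Iio_toType_ord_aleph_one i).insert i
  obtain ⟨p, hp⟩ := exists_isFreshProbe_of_not_isSeparable countable_Iio_toType_ord_aleph_one hns
  choose hpx hpψ hppos hpwit using hp
  have hbump : ∀ i, @ContinuousOn E ℝ (weakTop ℝ E) _ (probeBump (p i)) K := fun i => by
    let _ := weakTop ℝ E
    exact (continuous_probeBump (p i)).continuousOn
  obtain ⟨ε, hε, hA₁⟩ := exists_pos_not_countable_le not_countable_univ_toType_ord_aleph_one
    fun i _ => hμ.pos_of_mem_meanSupport (hpx i) (hbump i)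
      (fun z _ => (probeBump_mem_Icc _ z).1) (probeBump_pos_iff.2 (by linarith [hppos i]))
  obtain ⟨δ, hδ, hA⟩ := exists_pos_not_countable_le hA₁
    (v := fun i => (p i).1 (p i).2 / 2) fun i _ => half_pos (hppos i)
  obtain ⟨a, ha, haA, hapos⟩ := hμ.exists_strictMono_prod_pos hbump
    (fun i z _ => probeBump_mem_Icc _ z) hIic hA hε fun i hi => hi.1.2
  have hu := fun n => probeWitness_spec_of_prod_pos hμ (hapos (n + 1))
  obtain ⟨i, n, hni, hne⟩ := exists_lt_apply_ne_zero hK (fun n => (hu n).1)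
    (ψ := fun i => (p (a i)).1) (fun i => hpψ (a i)) hδ fun i n hin => by
      linarith [probeBump_pos_iff.1 ((hu n).2 i (Finset.mem_range.2 (by omega))), (haA i).2]
  refine hne (hpwit (a i) _ fun q hq => ?_)
  obtain ⟨k, hk, rfl⟩ := Finset.mem_image.1 hq
  exact ⟨a k, ha (by rw [Finset.mem_range] at hk; omega), rfl⟩

end Separability

theorem exists_invariant_separable_subset_general (S : Type*) [Semigroup S] [TopologicalSpace S]
    (X : Set (S → ℂ))
    (E : Type*) [NormedAddCommGroup E] [NormedSpace ℝ E]
    (K : Set E) (act : S → E → E)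
    (hcomp : @IsCompact E (weakTop ℝ E) K)
    (hact : IsActionOn act K) (hsc : WeaklySepContOn act K)
    (y : K) (hy : ∀ f : E → ℂ, @ContinuousOn E ℂ (weakTop ℝ E) _ f K →
      (fun s : S => f (act s y)) ∈ X)
    (hLIM : HasLIM X) :
    ∃ K₀ ⊆ K, K₀.Nonempty ∧ @IsCompact E (weakTop ℝ E) K₀ ∧
      TopologicalSpace.IsSeparable K₀ ∧ ∀ s : S, act s '' K₀ = K₀ := by
  obtain ⟨m, hm⟩ := hLIM
  have : @T2Space E (weakTop ℝ E) := t2Space_weakTop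
  have hμ : @IsMeanOn E (weakTop ℝ E) K (orbitMean m fun s => act s y) :=
    isMeanOn_orbitMean hm hcomp (fun s => hact.1 s y.2) hy
  have hinv (s : S) (f : E → ℝ) (hf : @ContinuousOn E ℝ (weakTop ℝ E) _ f K) :
      orbitMean m (fun s => act s y) (f ∘ act s) = orbitMean m (fun s => act s y) f := by
    let _ := weakTop ℝ E
    exact orbitMean_comp hm (fun t => hact.2 s t y y.2)
      (hy _ (Complex.continuous_ofReal.comp_continuousOn hf))
  exact ⟨_, meanSupport_subset, meanSupport_nonempty hcomp hμ, isCompact_meanSupport hcomp,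
    isSeparable_meanSupport hcomp hμ,
    fun s => image_meanSupport hcomp hμ (hsc.1 s) (hact.1 s) (hinv s)⟩

/-- Lemma `Lem`: Let `X` be a norm-closed translation-invariant linear
subspace of `ℓ^∞(S)` containing the constants. If `S` acts on a nonempty weakly compact
subset `K` of a Banach space `E` so that the action is weakly separately continuous, there
is `y ∈ K` such that `s ↦ f (s • y)` belongs to `X` for every weakly continuous
`f : K → ℂ`, and `X` has a left invariant mean, then there exists a nonempty weakly
compact, norm-separable subset `K₀` of `K` with `s • K₀ = K₀` for every `s ∈ S`. -/
theorem exists_invariant_separable_subset (S : Type*) [Semigroup S] [TopologicalSpace S]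
    [T2Space S] [SemitopoSemigroup S]
    (X : Set (S → ℂ)) (hX : IsTransInvSubspace X)
    (E : Type*) [NormedAddCommGroup E] [NormedSpace ℝ E] [CompleteSpace E]
    (K : Set E) (act : S → E → E)
    (hne : K.Nonempty) (hcomp : @IsCompact E (weakTop ℝ E) K)
    (hact : IsActionOn act K) (hsc : WeaklySepContOn act K)
    (y : K) (hy : ∀ f : E → ℂ, @ContinuousOn E ℂ (weakTop ℝ E) _ f K →
      (fun s : S => f (act s y)) ∈ X)
    (hLIM : HasLIM X) :
    ∃ K₀ ⊆ K, K₀.Nonempty ∧ @IsCompact E (weakTop ℝ E) K₀ ∧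
      TopologicalSpace.IsSeparable K₀ ∧ ∀ s : S, act s '' K₀ = K₀ :=
  exists_invariant_separable_subset_general S X E K act hcomp hact hsc y hy hLIM
end

section
/- Let E be a Banach space, let K be a weakly compact subset of E equipped with the weak topology, and let μ be a finite Radon measure on K. Then the support of μ is separable in the norm topology of E. -/
open scoped BoundedContinuousFunction

/-- The weak topology of `E` restricted to a subset `K`. -/
noncomputable def weakSubTop (E : Type*) [NormedAddCommGroup E] [NormedSpace ℝ E]
    (K : Set E) : TopologicalSpace ↥K :=
  TopologicalSpace.induced Subtype.val (weakTop ℝ E)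


/-!
The support `S` of `μ` is weakly compact. Every sequence in the dual unit ball has a subsequence
converging pointwise on `K`: its limits along ultrafilters (Banach–Alaoglu) factor through the
evaluation map `K → ℝ^ℕ`, whose image is separable, so by compactness of `K` they are all
determined by their values on a countable set, where a diagonal subsequence already converges.
By dominated convergence the dual ball is therefore sequentially compact, hence separable, in
`L¹(μ)`. Two functionals with the same class in `L¹(μ)` agree on `S`, so a countable `L¹`-dense
family `D` separates the points of `S`; then `S` embeds into `ℝ^D` and is weakly separable, and
weakly separable sets are norm separable because closed subspaces are weakly closed.
-/

open Filter Topology Set MeasureTheory TopologicalSpace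

theorem TopologicalSpace.IsSeparable.exists_countable_subset_image_dense {α β : Type*}
    [TopologicalSpace β] [PseudoMetrizableSpace β] {f : α → β} {s : Set α}
    (hs : IsSeparable (f '' s)) : ∃ t ⊆ s, t.Countable ∧ f '' s ⊆ closure (f '' t) := by
  obtain ⟨u, hus, huc, hsu⟩ := hs.exists_countable_dense_subset
  obtain ⟨v, hvs, rfl⟩ := subset_image_iff.mp hus
  obtain ⟨t, htv, hbij⟩ := exists_subset_bijOn v f
  exact ⟨t, htv.trans hvs, hbij.mapsTo.countable_of_injOn hbij.injOn huc, hbij.image_eq ▸ hsu⟩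

theorem IsCompact.isSeparable_of_injOn {X Y : Type*} [TopologicalSpace X] [TopologicalSpace Y]
    [SecondCountableTopology Y] [T2Space Y] {s : Set X} (hs : IsCompact s) {f : X → Y}
    (hf : Continuous f) (hinj : InjOn f s) : IsSeparable s := by
  have : CompactSpace s := isCompact_iff_compactSpace.mp hs
  have : SecondCountableTopology s := ((hf.comp continuous_subtype_val).isClosedEmbedding
    hinj.injective).isEmbedding.secondCountableTopology
  simpa using (IsSeparable.of_separableSpace (univ : Set s)).image continuous_subtype_val

theorem eq_of_eqOn_of_factor_of_dense_image {X Y Z : Type*} [TopologicalSpace X] [CompactSpace X]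
    [TopologicalSpace Y] [T2Space Y] [TopologicalSpace Z] [T2Space Z] {q : X → Y}
    (hq : Continuous q) {C : Set X} (hC : range q ⊆ closure (q '' C)) {u v : X → Z}
    (hu : Continuous u) (hv : Continuous v) (hqu : ∀ x y, q x = q y → u x = u y)
    (hqv : ∀ x y, q x = q y → v x = v y) (huv : EqOn u v C) : u = v := by
  have hclosed : IsClosed (q '' {x | u x = v x}) :=
    ((isClosed_eq hu hv).isCompact.image hq).isClosed
  funext x
  obtain ⟨y, hy, hxy⟩ := closure_minimal (image_mono huv) hclosed (hC (mem_range_self x))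
  rw [hqu x y hxy.symm, hy, hqv y x hxy]

theorem exists_strictMono_forall_tendsto {ι : Type*} [Countable ι] (y : ι → ℕ → ℝ)
    (hy : ∀ i, Bornology.IsBounded (range (y i))) :
    ∃ σ : ℕ → ℕ, StrictMono σ ∧ ∀ i, ∃ L, Tendsto (y i ∘ σ) atTop (𝓝 L) := by
  have hK : IsCompact (univ.pi fun i => closure (range (y i))) :=
    isCompact_univ_pi fun i => (hy i).isCompact_closure
  obtain ⟨L, -, σ, hσ, hL⟩ := hK.isSeqCompact (x := fun n i => y i n)
    fun n => mem_univ_pi.mpr fun i => subset_closure (mem_range_self n)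
  exact ⟨σ, hσ, fun i => ⟨L i, tendsto_pi_nhds.mp hL i⟩⟩

theorem MeasureTheory.tendsto_toL1_of_dominated_convergence {α G : Type*} [MeasurableSpace α]
    {μ : Measure α} [NormedAddCommGroup G] {f : ℕ → α → G} {g : α → G}
    (hf : ∀ n, Integrable (f n) μ) (hg : Integrable g μ) {bound : α → ℝ}
    (hbound : Integrable bound μ) (h_bound : ∀ n, ∀ᵐ a ∂μ, ‖f n a‖ ≤ bound a)
    (h_lim : ∀ᵐ a ∂μ, Tendsto (fun n => f n a) atTop (𝓝 (g a))) :
    Tendsto (fun n => (hf n).toL1 (f n)) atTop (𝓝 (hg.toL1 g)) := by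
  refine (Lp.tendsto_Lp_iff_tendsto_eLpNorm'' f (fun n => memLp_one_iff_integrable.mpr (hf n)) g
    (memLp_one_iff_integrable.mpr hg)).mpr ?_
  simpa only [eLpNorm_one_eq_lintegral_enorm, Pi.sub_apply, ofReal_norm] using
    tendsto_lintegral_norm_of_dominated_convergence (fun n => (hf n).aestronglyMeasurable)
      hbound.hasFiniteIntegral h_bound h_lim

theorem MeasureTheory.Measure.eqOn_support_of_ae_eq {X Y : Type*} [TopologicalSpace X]
    [MeasurableSpace X] [TopologicalSpace Y] [T2Space Y] {μ : Measure X} {f g : X → Y}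
    (hf : Continuous f) (hg : Continuous g) (h : f =ᵐ[μ] g) : EqOn f g μ.support := fun x hx => by
  by_contra hne
  exact subset_compl_support_of_isOpen (isOpen_ne_fun hf hg) (ae_iff.mp h) hne hx

section NormedSpace

variable {E : Type*} [NormedAddCommGroup E] [NormedSpace ℝ E]

theorem TopologicalSpace.IsSeparable.of_toWeakSpace {s : Set E}
    (hs : IsSeparable (toWeakSpace ℝ E '' s)) : IsSeparable s := by
  obtain ⟨t, htc, hst⟩ := hs
  set V : Submodule ℝ E := Submodule.span ℝ ((toWeakSpace ℝ E).symm '' t)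
  have hVsep : IsSeparable (closure (V : Set E)) :=
    ((htc.image (toWeakSpace ℝ E).symm).isSeparable.span (R := ℝ)).closure
  refine hVsep.mono fun x hx => ?_
  have htV : t ⊆ toWeakSpace ℝ E '' V := fun w hw =>
    ⟨_, Submodule.subset_span (mem_image_of_mem _ hw), LinearEquiv.apply_symm_apply _ w⟩
  have := closure_mono htV (hst (mem_image_of_mem _ hx))
  rw [← V.convex.toWeakSpace_closure ℝ] at this
  exact (toWeakSpace ℝ E).injective.mem_set_image.mp this

theorem StrongDual.exists_tendsto_apply_of_norm_le {α : Type*} (U : Ultrafilter α) {r : ℝ}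
    (φ : α → StrongDual ℝ E) (hφ : ∀ a, ‖φ a‖ ≤ r) :
    ∃ ψ : StrongDual ℝ E, ‖ψ‖ ≤ r ∧ ∀ w, Tendsto (fun a => φ a w) U (𝓝 (ψ w)) := by
  obtain ⟨ψ, hψr, hψ⟩ := (WeakDual.isCompact_closedBall (𝕜 := ℝ) (E := E) 0 r).ultrafilter_le_nhds
    (U.map (StrongDual.toWeakDual ∘ φ))
    (le_principal_iff.mpr (Ultrafilter.mem_map.mpr (univ_mem' fun a => by simpa using hφ a)))
  exact ⟨WeakDual.toStrongDual ψ, by simpa using hψr,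
    fun w => ((WeakDual.eval_continuous w).tendsto ψ).comp hψ⟩

variable {X : Type*} [TopologicalSpace X] [CompactSpace X] {ι : X → E}

theorem exists_norm_le_of_continuous_dual_comp
    (hι : ∀ φ : StrongDual ℝ E, Continuous fun x => φ (ι x)) : ∃ M, ∀ x, ‖ι x‖ ≤ M := by
  obtain ⟨M, hM⟩ := banach_steinhaus (g := fun x => NormedSpace.inclusionInDoubleDualLi ℝ (ι x))
    fun φ => by
      obtain ⟨C, hC⟩ := (isCompact_range (hι φ)).isBounded.exists_norm_le
      exact ⟨C, fun x => hC _ (mem_range_self x)⟩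
  exact ⟨M, fun x => (NormedSpace.inclusionInDoubleDualLi ℝ).norm_map (ι x) ▸ hM x⟩

theorem exists_tendsto_dual_apply_of_tendsto_on
    (hι : ∀ φ : StrongDual ℝ E, Continuous fun x => φ (ι x)) {α : Type*} {l : Filter α}
    [l.NeBot] {r : ℝ} (φ : α → StrongDual ℝ E) (hφ : ∀ a, ‖φ a‖ ≤ r) {C : Set X}
    (hC : range (fun x a => φ a (ι x)) ⊆ closure ((fun x a => φ a (ι x)) '' C))
    (hconv : ∀ z ∈ C, ∃ L, Tendsto (fun a => φ a (ι z)) l (𝓝 L)) :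
    ∃ ψ : StrongDual ℝ E, ‖ψ‖ ≤ r ∧ ∀ x, Tendsto (fun a => φ a (ι x)) l (𝓝 (ψ (ι x))) := by
  -- Limits of `φ` along ultrafilters finer than `l` factor through `x ↦ (φ a (ι x))_a`,
  -- hence are determined by their values on `C`.
  have hlim_eq : ∀ (U₁ U₂ : Ultrafilter α) (ψ₁ ψ₂ : StrongDual ℝ E), ↑U₁ ≤ l → ↑U₂ ≤ l →
      (∀ w, Tendsto (fun a => φ a w) U₁ (𝓝 (ψ₁ w))) →
      (∀ w, Tendsto (fun a => φ a w) U₂ (𝓝 (ψ₂ w))) → ∀ x, ψ₁ (ι x) = ψ₂ (ι x) := by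
    intro U₁ U₂ ψ₁ ψ₂ hU₁ hU₂ h₁ h₂
    have hfactor : ∀ (U : Ultrafilter α) (ψ : StrongDual ℝ E),
        (∀ w, Tendsto (fun a => φ a w) U (𝓝 (ψ w))) →
        ∀ x y, (fun a => φ a (ι x)) = (fun a => φ a (ι y)) → ψ (ι x) = ψ (ι y) :=
      fun U ψ h x y hxy => tendsto_nhds_unique (h (ι x)) (hxy ▸ h (ι y))
    have hC_eq : EqOn (fun x => ψ₁ (ι x)) (fun x => ψ₂ (ι x)) C := fun z hz => by
      obtain ⟨L, hL⟩ := hconv z hz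
      exact (tendsto_nhds_unique (h₁ (ι z)) (hL.mono_left hU₁)).trans
        (tendsto_nhds_unique (h₂ (ι z)) (hL.mono_left hU₂)).symm
    exact congrFun (eq_of_eqOn_of_factor_of_dense_image (continuous_pi fun a => hι (φ a)) hC
      (hι ψ₁) (hι ψ₂) (hfactor U₁ ψ₁ h₁) (hfactor U₂ ψ₂ h₂) hC_eq)
  obtain ⟨ψ, hψr, hψ⟩ := StrongDual.exists_tendsto_apply_of_norm_le (.of l) φ hφ
  refine ⟨ψ, hψr, fun x => isCompact_Icc.tendsto_nhds_of_unique_mapClusterPt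
    (Eventually.of_forall fun a => abs_le.mp ((φ a).le_of_opNorm_le (hφ a) (ι x)))
    fun c _ hc => ?_⟩
  obtain ⟨U, hU, hUc⟩ := mapClusterPt_iff_ultrafilter.mp hc
  obtain ⟨ψ', -, hψ'⟩ := StrongDual.exists_tendsto_apply_of_norm_le U φ hφ
  rw [tendsto_nhds_unique hUc (hψ' (ι x))]
  exact hlim_eq U _ ψ' ψ hU (Ultrafilter.of_le l) hψ' hψ x

theorem exists_strictMono_tendsto_dual_apply
    (hι : ∀ φ : StrongDual ℝ E, Continuous fun x => φ (ι x)) {r : ℝ} (φ : ℕ → StrongDual ℝ E)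
    (hφ : ∀ n, ‖φ n‖ ≤ r) :
    ∃ ψ : StrongDual ℝ E, ‖ψ‖ ≤ r ∧ ∃ σ : ℕ → ℕ, StrictMono σ ∧
      ∀ x, Tendsto (fun j => φ (σ j) (ι x)) atTop (𝓝 (ψ (ι x))) := by
  set q : X → ℕ → ℝ := fun x n => φ n (ι x)
  obtain ⟨C, -, hCc, hCd⟩ :=
    (IsSeparable.of_separableSpace (q '' univ)).exists_countable_subset_image_dense
  have : Countable C := hCc.to_subtype
  obtain ⟨σ, hσ, hlim⟩ := exists_strictMono_forall_tendsto (fun z : C => q z) fun z =>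
    (Metric.isBounded_closedBall (x := 0) (r := r * ‖ι z‖)).subset <| range_subset_iff.mpr
      fun n => mem_closedBall_zero_iff.mpr ((φ n).le_of_opNorm_le (hφ n) _)
  obtain ⟨ψ, hψr, hψ⟩ := exists_tendsto_dual_apply_of_tendsto_on hι (l := map σ atTop) φ hφ
    (C := C) (by simpa [q] using hCd) fun z hz => by
      simpa [tendsto_map'_iff] using hlim ⟨z, hz⟩
  exact ⟨ψ, hψr, σ, hσ, fun x => tendsto_map'_iff.mp (hψ x)⟩

section L1

variable [MeasurableSpace X] [OpensMeasurableSpace X] (μ : Measure X) [IsFiniteMeasure μ]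

theorem integrable_dual_comp (hι : ∀ φ : StrongDual ℝ E, Continuous fun x => φ (ι x))
    (φ : StrongDual ℝ E) : Integrable (fun x => φ (ι x)) μ :=
  (hι φ).integrable_of_hasCompactSupport (.of_compactSpace _)

noncomputable def dualToL1 (hι : ∀ φ : StrongDual ℝ E, Continuous fun x => φ (ι x))
    (φ : StrongDual ℝ E) : X →₁[μ] ℝ :=
  (integrable_dual_comp μ hι φ).toL1 _

theorem tendsto_dualToL1 (hι : ∀ φ : StrongDual ℝ E, Continuous fun x => φ (ι x)) {r : ℝ}
    {φ : ℕ → StrongDual ℝ E} (hφ : ∀ n, ‖φ n‖ ≤ r) {ψ : StrongDual ℝ E}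
    (hψ : ∀ x, Tendsto (fun n => φ n (ι x)) atTop (𝓝 (ψ (ι x)))) :
    Tendsto (fun n => dualToL1 μ hι (φ n)) atTop (𝓝 (dualToL1 μ hι ψ)) := by
  obtain ⟨M, hM⟩ := exists_norm_le_of_continuous_dual_comp hι
  exact tendsto_toL1_of_dominated_convergence _ _ (integrable_const (r * M))
    (fun n => .of_forall fun x => (φ n).le_of_opNorm_le (hφ n) (ι x) |>.trans <|
      mul_le_mul_of_nonneg_left (hM x) ((norm_nonneg _).trans (hφ n)))
    (.of_forall hψ)

theorem isSeparable_dualToL1_image_closedBall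
    (hι : ∀ φ : StrongDual ℝ E, Continuous fun x => φ (ι x)) (r : ℝ) :
    IsSeparable (dualToL1 μ hι '' Metric.closedBall 0 r) := by
  refine (IsSeqCompact.isCompact fun u hu => ?_).isSeparable
  choose φ hφ hφu using hu
  simp only [mem_closedBall_zero_iff] at hφ
  obtain ⟨ψ, hψ, σ, hσ, hlim⟩ := exists_strictMono_tendsto_dual_apply hι φ hφ
  refine ⟨_, mem_image_of_mem _ (mem_closedBall_zero_iff.mpr hψ), σ, hσ, ?_⟩
  simpa only [Function.comp_def, hφu] using tendsto_dualToL1 μ hι (fun n => hφ (σ n)) hlim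

theorem exists_countable_forall_apply_eq_of_mem_support
    (hι : ∀ φ : StrongDual ℝ E, Continuous fun x => φ (ι x)) (r : ℝ) :
    ∃ D : Set (StrongDual ℝ E), D.Countable ∧ ∀ g ∈ Metric.closedBall (0 : StrongDual ℝ E) r,
      ∀ x ∈ μ.support, ∀ y ∈ μ.support, (∀ χ ∈ D, χ (ι x) = χ (ι y)) → g (ι x) = g (ι y) := by
  obtain ⟨D, hDr, hDc, hDd⟩ :=
    (isSeparable_dualToL1_image_closedBall μ hι r).exists_countable_subset_image_dense
  refine ⟨D, hDc, fun g hg x hx y hy hxy => ?_⟩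
  obtain ⟨u, hu, hug⟩ := mem_closure_iff_seq_limit.mp (hDd (mem_image_of_mem _ hg))
  choose φ hφD hφu using hu
  have hφr : ∀ n, ‖φ n‖ ≤ r := fun n => mem_closedBall_zero_iff.mp (hDr (hφD n))
  obtain ⟨ψ, -, σ, hσ, hψ⟩ := exists_strictMono_tendsto_dual_apply hι φ hφr
  have hgψ : dualToL1 μ hι g = dualToL1 μ hι ψ := by
    refine tendsto_nhds_unique ?_ (tendsto_dualToL1 μ hι (fun n => hφr (σ n)) hψ)
    simpa only [Function.comp_def, hφu] using hug.comp hσ.tendsto_atTop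
  have hsupp := Measure.eqOn_support_of_ae_eq (hι g) (hι ψ)
    ((Integrable.toL1_eq_toL1_iff _ _ _ _).mp hgψ)
  exact (hsupp hx).trans <| (tendsto_nhds_unique (hψ x)
    (by simpa only [hxy _ (hφD _)] using hψ y)).trans (hsupp hy).symm

theorem isSeparable_image_support (hι : ∀ φ : StrongDual ℝ E, Continuous fun x => φ (ι x)) :
    IsSeparable (ι '' μ.support) := by
  choose D hDc hD using exists_countable_forall_apply_eq_of_mem_support μ hι
  have : Countable (⋃ n : ℕ, D n) := (countable_iUnion fun n : ℕ => hDc n).to_subtype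
  have hsep : ∀ x ∈ μ.support, ∀ y ∈ μ.support,
      (∀ χ ∈ ⋃ n : ℕ, D n, χ (ι x) = χ (ι y)) → ι x = ι y := fun x hx y hy hxy =>
    SeparatingDual.eq_iff_forall_dual_eq.mpr fun g =>
      have ⟨n, hn⟩ := exists_nat_ge ‖g‖
      hD n g (mem_closedBall_zero_iff.mpr hn) x hx y hy fun χ hχ => hxy χ (mem_iUnion_of_mem n hχ)
  refine IsSeparable.of_toWeakSpace ?_
  rw [image_image]
  refine (Measure.isClosed_support.isCompact.image
    (WeakBilin.continuous_of_continuous_eval _ hι)).isSeparable_of_injOn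
    (f := fun w (χ : ⋃ n : ℕ, D n) => χ.1 ((toWeakSpace ℝ E).symm w))
    (continuous_pi fun χ => WeakBilin.eval_continuous _ χ.1) ?_
  rintro _ ⟨x, hx, rfl⟩ _ ⟨y, hy, rfl⟩ hxy
  exact congrArg _ (hsep x hx y hy fun χ hχ => congrFun hxy ⟨χ, hχ⟩)

end L1

end NormedSpace

theorem radon_measure_support_norm_separable_general (E : Type*) [NormedAddCommGroup E]
    [NormedSpace ℝ E] (K : Set E) (hK : @IsCompact E (weakTop ℝ E) K)
    (μ : @MeasureTheory.Measure ↥K (@borel ↥K (weakSubTop E K)))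
    (hfin : μ Set.univ ≠ ⊤) :
    TopologicalSpace.IsSeparable
      (Subtype.val '' {x : ↥K | ∀ U : Set ↥K,
        @IsOpen ↥K (weakSubTop E K) U → x ∈ U → μ U ≠ 0}) := by
  let : TopologicalSpace K := weakSubTop E K
  let : MeasurableSpace K := borel K
  have : BorelSpace K := ⟨rfl⟩
  have : CompactSpace K := (@isCompact_iff_compactSpace E (weakTop ℝ E) K).mp hK
  have : IsFiniteMeasure μ := ⟨hfin.lt_top⟩
  have hweak : ∀ φ : StrongDual ℝ E, Continuous[weakTop ℝ E, _] φ :=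
    fun φ => continuous_iInf_dom (i := φ) continuous_induced_dom
  have hι : ∀ φ : StrongDual ℝ E, Continuous fun x : K => φ x :=
    fun φ => @Continuous.comp _ _ _ _ (weakTop ℝ E) _ _ _ (hweak φ) continuous_induced_dom
  have hsupport : {x : K | ∀ U : Set K, IsOpen U → x ∈ U → μ U ≠ 0} = μ.support := by
    simp only [Measure.support_eq_forall_isOpen, pos_iff_ne_zero]
    exact Set.ext fun x => forall_congr' fun U => forall_comm
  rw [hsupport]
  exact isSeparable_image_support μ hι

/-- Grothendieck's theorem, Theorem `Rad`: every finite Radon measure on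
a weakly compact subset `K` of a Banach space (with the weak topology) has norm-separable
support. Here a finite Radon measure is a finite Borel measure which is inner regular with
respect to compact sets, and the support is the set of points all of whose open
neighborhoods have positive measure. -/
theorem radon_measure_support_norm_separable (E : Type*) [NormedAddCommGroup E]
    [NormedSpace ℝ E] [CompleteSpace E] (K : Set E) (hK : @IsCompact E (weakTop ℝ E) K)
    (μ : @MeasureTheory.Measure ↥K (@borel ↥K (weakSubTop E K)))
    (hfin : μ Set.univ ≠ ⊤)
    (hreg : ∀ A : Set ↥K, @MeasurableSet ↥K (@borel ↥K (weakSubTop E K)) A →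
      μ A = ⨆ (C : Set ↥K) (_ : C ⊆ A ∧ @IsCompact ↥K (weakSubTop E K) C), μ C) :
    TopologicalSpace.IsSeparable
      (Subtype.val '' {x : ↥K | ∀ U : Set ↥K,
        @IsOpen ↥K (weakSubTop E K) U → x ∈ U → μ U ≠ 0}) :=
  radon_measure_support_norm_separable_general E K hK μ hfin
end

section
/- Let S be a semitopological semigroup and let X be a left introverted norm-closed linear subspace of ℓ∞(S), invariant under all left and right translations, with 1 ∈ X. Then X has a left invariant mean if and only if for every f ∈ X the closure, in the topology of pointwise convergence on S, of the convex hull of {r_s f : s ∈ S} contains a constant function. -/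
open scoped BoundedContinuousFunction

/-- `φ` is a bounded (continuous) linear functional on the subspace `X` of `ℓ^∞(S)`. -/
def IsBddLinearOn {S : Type*} (X : Set (S → ℂ)) (φ : (S → ℂ) → ℂ) : Prop :=
  (∀ f ∈ X, ∀ g ∈ X, φ (f + g) = φ f + φ g) ∧
    (∀ (c : ℂ), ∀ f ∈ X, φ (c • f) = c * φ f) ∧
    ∃ C : ℝ, ∀ f ∈ X, ‖φ f‖ ≤ C * supNorm f

/-- `X` is left introverted: for every continuous linear functional `φ` on `X` and every
`f ∈ X`, the function `s ↦ φ (l_s f)` belongs to `X`. -/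
def IsLeftIntroverted {S : Type*} [Semigroup S] (X : Set (S → ℂ)) : Prop :=
  ∀ φ : (S → ℂ) → ℂ, IsBddLinearOn X φ → ∀ f ∈ X, (fun s : S => φ (lTrans s f)) ∈ X

/-! ### Auxiliary machinery for the Granirer–Lau theorem -/

namespace GranirerLau

open Filter Topology

section MeanBasics

variable {S : Type*} [Semigroup S] {X : Set (S → ℂ)}

/-- A mean on `X`: linear, norm-bounded by the sup norm, sending `1` to `1`. -/
structure IsMeanOn (X : Set (S → ℂ)) (m : (S → ℂ) → ℂ) : Prop where
  add : ∀ f ∈ X, ∀ g ∈ X, m (f + g) = m f + m g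
  smul : ∀ (c : ℂ), ∀ f ∈ X, m (c • f) = c * m f
  norm_le : ∀ f ∈ X, ‖m f‖ ≤ supNorm f
  map_one : m (fun _ : S => (1 : ℂ)) = 1

lemma supNorm_nonneg (f : S → ℂ) : 0 ≤ supNorm f :=
  Real.iSup_nonneg fun _ => norm_nonneg _

lemma norm_le_supNorm {f : S → ℂ} (hb : BddFun f) (t : S) : ‖f t‖ ≤ supNorm f := by
  obtain ⟨C, hC⟩ := hb
  exact le_ciSup ⟨C, by rintro x ⟨u, rfl⟩; exact hC u⟩ t

lemma supNorm_le {f : S → ℂ} {a : ℝ} (h : ∀ t, ‖f t‖ ≤ a) (ha : 0 ≤ a) : supNorm f ≤ a :=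
  Real.iSup_le h ha

lemma supNorm_lTrans_le {f : S → ℂ} (hb : BddFun f) (s : S) :
    supNorm (lTrans s f) ≤ supNorm f :=
  supNorm_le (fun t => norm_le_supNorm hb (s * t)) (supNorm_nonneg f)

lemma lTrans_lTrans (s t : S) (f : S → ℂ) : lTrans s (lTrans t f) = lTrans (t * s) f := by
  funext u; simp [lTrans, mul_assoc]

lemma lTrans_add (s : S) (f g : S → ℂ) : lTrans s (f + g) = lTrans s f + lTrans s g := rfl

lemma lTrans_smul (s : S) (c : ℂ) (f : S → ℂ) : lTrans s (c • f) = c • lTrans s f := rfl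

lemma lTrans_const (s : S) (c : ℂ) : lTrans s (fun _ : S => c) = fun _ : S => c := rfl

lemma IsMeanOn.const (hX : IsTransInvSubspace X) {m : (S → ℂ) → ℂ}
    (hm : IsMeanOn X m) (c : ℂ) : m (fun _ : S => c) = c := by
  have h : (fun _ : S => c) = c • (fun _ : S => (1 : ℂ)) := by funext t; simp
  rw [h, hm.smul c _ (hX.const_mem 1), hm.map_one, mul_one]

lemma isMeanOn_delta (hX : IsTransInvSubspace X) (s : S) :
    IsMeanOn X (fun g => g s) where
  add _ _ _ _ := rfl
  smul _ _ _ := rfl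
  norm_le f hf := norm_le_supNorm (hX.bdd f hf) s
  map_one := rfl

lemma IsMeanOn.isBddLinearOn {m : (S → ℂ) → ℂ} (hm : IsMeanOn X m) :
    IsBddLinearOn X m :=
  ⟨hm.add, hm.smul, 1, fun f hf => by simpa using hm.norm_le f hf⟩

/-- The introversion operator `T_m f (t) = m (l_t f)`. -/
noncomputable def Tm (m : (S → ℂ) → ℂ) (f : S → ℂ) : S → ℂ := fun t => m (lTrans t f)

lemma Tm_mem (hintro : IsLeftIntroverted X) {m : (S → ℂ) → ℂ} (hm : IsMeanOn X m)
    {f : S → ℂ} (hf : f ∈ X) : Tm m f ∈ X :=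
  hintro m hm.isBddLinearOn f hf

lemma Tm_lTrans (m : (S → ℂ) → ℂ) (t : S) (f : S → ℂ) :
    Tm m (lTrans t f) = lTrans t (Tm m f) := by
  funext s
  show m (lTrans s (lTrans t f)) = m (lTrans (t * s) f)
  rw [lTrans_lTrans]

lemma isMeanOn_comp (hX : IsTransInvSubspace X) (hintro : IsLeftIntroverted X)
    {m₁ m₂ : (S → ℂ) → ℂ} (hm₁ : IsMeanOn X m₁) (hm₂ : IsMeanOn X m₂) :
    IsMeanOn X (fun g => m₂ (Tm m₁ g)) where
  add f hf g hg := by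
    have h : Tm m₁ (f + g) = Tm m₁ f + Tm m₁ g := by
      funext t
      show m₁ (lTrans t (f + g)) = m₁ (lTrans t f) + m₁ (lTrans t g)
      rw [lTrans_add, hm₁.add _ (hX.lTrans_mem t f hf) _ (hX.lTrans_mem t g hg)]
    simp only [h]
    exact hm₂.add _ (Tm_mem hintro hm₁ hf) _ (Tm_mem hintro hm₁ hg)
  smul c f hf := by
    have h : Tm m₁ (c • f) = c • Tm m₁ f := by
      funext t
      show m₁ (lTrans t (c • f)) = c * m₁ (lTrans t f)
      rw [lTrans_smul, hm₁.smul c _ (hX.lTrans_mem t f hf)]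
    simp only [h]
    exact hm₂.smul c _ (Tm_mem hintro hm₁ hf)
  norm_le f hf := by
    refine (hm₂.norm_le _ (Tm_mem hintro hm₁ hf)).trans ?_
    refine supNorm_le (fun t => ?_) (supNorm_nonneg f)
    exact (hm₁.norm_le _ (hX.lTrans_mem t f hf)).trans
      (supNorm_lTrans_le (hX.bdd f hf) t)
  map_one := by
    have h : Tm m₁ (fun _ : S => (1 : ℂ)) = fun _ : S => (1 : ℂ) := by
      funext t
      show m₁ (lTrans t (fun _ : S => (1 : ℂ))) = 1
      rw [lTrans_const, hm₁.map_one]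
    simp only [h, hm₂.map_one]

lemma sum_smul_mem (hX : IsTransInvSubspace X) {ι : Type*} (A : Finset ι)
    (c : ι → ℂ) (e : ι → (S → ℂ)) (he : ∀ i ∈ A, e i ∈ X) :
    (∑ i ∈ A, c i • e i) ∈ X := by
  classical
  induction A using Finset.induction_on with
  | empty =>
      simp only [Finset.sum_empty]; exact hX.const_mem 0
  | @insert j B hj ih =>
      rw [Finset.sum_insert hj]
      exact hX.add_mem _ (hX.smul_mem _ _ (he j (Finset.mem_insert_self j B))) _
        (ih fun i hi => he i (Finset.mem_insert_of_mem hi))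

lemma mean_sum (hX : IsTransInvSubspace X) {m : (S → ℂ) → ℂ} (hm : IsMeanOn X m)
    {ι : Type*} (A : Finset ι) (c : ι → ℂ) (e : ι → (S → ℂ)) (he : ∀ i ∈ A, e i ∈ X) :
    m (∑ i ∈ A, c i • e i) = ∑ i ∈ A, c i * m (e i) := by
  classical
  induction A using Finset.induction_on with
  | empty =>
      simp only [Finset.sum_empty]
      have h0 : (0 : S → ℂ) = fun _ : S => (0 : ℂ) := rfl
      rw [h0, hm.const hX 0]
  | @insert j B hj ih =>
      rw [Finset.sum_insert hj, Finset.sum_insert hj,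
        hm.add _ (hX.smul_mem _ _ (he j (Finset.mem_insert_self j B))) _
          (sum_smul_mem hX B c e fun i hi => he i (Finset.mem_insert_of_mem hi)),
        hm.smul _ _ (he j (Finset.mem_insert_self j B)),
        ih fun i hi => he i (Finset.mem_insert_of_mem hi)]

/-- A mean is dominated by any upper bound of the real part. -/
lemma mean_re_le (hX : IsTransInvSubspace X) {m : (S → ℂ) → ℂ} (hm : IsMeanOn X m)
    {g : S → ℂ} (hg : g ∈ X) {a : ℝ} (ha : ∀ t, (g t).re ≤ a) : (m g).re ≤ a := by
  obtain ⟨M₀, hM₀⟩ := hX.bdd g hg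
  set M : ℝ := |M₀| + |a| + 1 with hMdef
  have hM0 : 0 < M := by positivity
  have hgM : ∀ t, ‖g t‖ ≤ |M₀| := fun t => (hM₀ t).trans (le_abs_self _)
  have key : ∀ R : ℝ, M ≤ R → (m g).re ≤ a + M ^ 2 / (2 * R) := by
    intro R hR
    have hRpos : 0 < R := lt_of_lt_of_le hM0 hR
    set z : ℂ := ((R - a : ℝ) : ℂ) with hz
    set h : S → ℂ := g + (fun _ : S => z) with hh
    have hhX : h ∈ X := hX.add_mem g hg _ (hX.const_mem z)
    have hmh : m h = m g + z := by
      rw [hh, hm.add g hg _ (hX.const_mem z), hm.const hX z]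
    have hbound : ∀ t, ‖h t‖ ≤ Real.sqrt (R ^ 2 + M ^ 2) := by
      intro t
      rw [Real.le_sqrt (norm_nonneg _) (by positivity)]
      have hsq : ‖h t‖ ^ 2 = (h t).re ^ 2 + (h t).im ^ 2 := by
        rw [Complex.sq_norm, Complex.normSq_apply]; ring
      have hre : (h t).re = (g t).re + (R - a) := by simp [hh, hz]
      have him : (h t).im = (g t).im := by simp [hh, hz]
      have h1 : |(g t).re| ≤ |M₀| :=
        (Complex.abs_re_le_norm (g t)).trans (by exact hgM t)
      have h2 : |(g t).im| ≤ |M₀| :=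
        (Complex.abs_im_le_norm (g t)).trans (by exact hgM t)
      have h1' := abs_le.mp h1
      have h2' := abs_le.mp h2
      have haa := ha t
      have hAabs := le_abs_self a
      have hAabs' := neg_abs_le a
      have e1 : 0 ≤ (g t).re + (R - a) := by
        have : -|M₀| - |a| ≥ -M := by rw [hMdef]; linarith
        linarith [h1'.1]
      have e2 : (g t).re + (R - a) ≤ R := by linarith
      have e3 : ((g t).re + (R - a)) ^ 2 ≤ R ^ 2 := by nlinarith
      have e4 : (g t).im ^ 2 ≤ M ^ 2 := by nlinarith [h2'.1, h2'.2]
      rw [hsq, hre, him]; linarith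
    have h2 : ‖m h‖ ≤ Real.sqrt (R ^ 2 + M ^ 2) :=
      (hm.norm_le h hhX).trans (supNorm_le hbound (Real.sqrt_nonneg _))
    have h3 : Real.sqrt (R ^ 2 + M ^ 2) ≤ R + M ^ 2 / (2 * R) := by
      rw [Real.sqrt_le_iff]
      refine ⟨by positivity, ?_⟩
      have hexp : (R + M ^ 2 / (2 * R)) ^ 2 = R ^ 2 + M ^ 2 + (M ^ 2 / (2 * R)) ^ 2 := by
        field_simp; ring
      nlinarith [sq_nonneg (M ^ 2 / (2 * R))]
    have h4 : (m h).re ≤ ‖m h‖ := by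
      exact Complex.re_le_norm _
    have h5 : (m h).re = (m g).re + (R - a) := by rw [hmh]; simp [hz]
    linarith
  by_contra hcon
  push_neg at hcon
  set ε : ℝ := ((m g).re - a) / 2 with hε
  have hεpos : 0 < ε := by rw [hε]; linarith
  set R : ℝ := M + M ^ 2 / (2 * ε) with hRdef
  have hRM : M ≤ R := by
    rw [hRdef]
    have : 0 ≤ M ^ 2 / (2 * ε) := by positivity
    linarith
  have hRpos : 0 < R := lt_of_lt_of_le hM0 hRM
  have h6 := key R hRM
  have h7 : M ^ 2 / (2 * R) ≤ ε := by
    rw [div_le_iff₀ (by positivity)]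
    have hcalc : ε * (2 * R) = 2 * ε * M + M ^ 2 := by
      rw [hRdef]; field_simp
    nlinarith [hεpos, hM0]
  have : (m g).re ≤ a + ε := by linarith
  rw [hε] at this; linarith

end MeanBasics

section Construction

variable {S : Type*} [Semigroup S] {X : Set (S → ℂ)}

/-- Every element of the convex hull of the right orbit of `f` is of the form
`t ↦ μ (l_t f)` for a finitely supported mean `μ`. -/
lemma exists_mean_of_mem_convexHull [Nonempty S] (hX : IsTransInvSubspace X)
    {f h : S → ℂ} (hh : h ∈ convexHull ℝ (Set.range fun s : S => rTrans s f)) :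
    ∃ μ : (S → ℂ) → ℂ, IsMeanOn X μ ∧ ∀ t, μ (lTrans t f) = h t := by
  classical
  rw [convexHull_eq] at hh
  obtain ⟨ι, A, w, z, hw0, hw1, hz, hcm⟩ := hh
  have hzz : ∀ i ∈ A, ∃ s : S, rTrans s f = z i := fun i hi => hz i hi
  choose! σ hσ using hzz
  refine ⟨fun g => ∑ i ∈ A, (w i : ℂ) * g (σ i), ?_, ?_⟩
  · constructor
    · intro p hp q hq
      simp only [Pi.add_apply, mul_add, Finset.sum_add_distrib]
    · intro c p hp
      simp only [Pi.smul_apply, smul_eq_mul, Finset.mul_sum]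
      exact Finset.sum_congr rfl fun i _ => by ring
    · intro p hp
      refine (norm_sum_le _ _).trans ?_
      have hterm : ∀ i ∈ A, ‖(w i : ℂ) * p (σ i)‖ ≤ w i * supNorm p := by
        intro i hi
        rw [norm_mul, Complex.norm_real, Real.norm_eq_abs, abs_of_nonneg (hw0 i hi)]
        exact mul_le_mul_of_nonneg_left (norm_le_supNorm (hX.bdd p hp) _) (hw0 i hi)
      refine (Finset.sum_le_sum hterm).trans ?_
      rw [← Finset.sum_mul, hw1, one_mul]
    · rw [show (∑ i ∈ A, (w i : ℂ) * (fun _ : S => (1:ℂ)) (σ i)) = ∑ i ∈ A, (w i : ℂ) by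
        exact Finset.sum_congr rfl fun i _ => mul_one _]
      rw [← Complex.ofReal_sum, hw1, Complex.ofReal_one]
  · intro t
    have hval : h t = ∑ i ∈ A, (w i : ℂ) * f (t * σ i) := by
      rw [← hcm, Finset.centerMass_eq_of_sum_1 _ _ hw1, Finset.sum_apply]
      refine Finset.sum_congr rfl fun i hi => ?_
      rw [Pi.smul_apply, ← hσ i hi]
      simp [rTrans, Complex.real_smul]
    rw [hval]
    rfl

/-- Ultrafilter limits of means are means. -/
lemma exists_limit_mean (hX : IsTransInvSubspace X) {ι : Type*} (𝒰 : Ultrafilter ι)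
    (μ : ι → (S → ℂ) → ℂ) (hμ : ∀ i, IsMeanOn X (μ i)) :
    ∃ m : (S → ℂ) → ℂ, IsMeanOn X m ∧
      ∀ g ∈ X, Filter.Tendsto (fun i => μ i g) 𝒰 (𝓝 (m g)) := by
  classical
  have key : ∀ g ∈ X, ∃ a : ℂ, Filter.Tendsto (fun i => μ i g) 𝒰 (𝓝 a) := by
    intro g hg
    have hmap : ↑(𝒰.map fun i => μ i g) ≤ 𝓟 (Metric.closedBall (0 : ℂ) (supNorm g)) := by
      rw [Filter.le_principal_iff, Ultrafilter.coe_map, Filter.mem_map]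
      refine Filter.univ_mem' fun i => ?_
      simpa [Metric.mem_closedBall, dist_zero_right] using (hμ i).norm_le g hg
    obtain ⟨a, -, ha⟩ :=
      (isCompact_closedBall (0 : ℂ) (supNorm g)).ultrafilter_le_nhds _ hmap
    rw [Ultrafilter.coe_map] at ha
    exact ⟨a, ha⟩
  choose! m hm using key
  refine ⟨m, ?_, hm⟩
  constructor
  · intro f hf g hg
    refine tendsto_nhds_unique (hm _ (hX.add_mem f hf g hg)) ?_
    have := (hm f hf).add (hm g hg)
    refine this.congr fun i => ?_
    exact ((hμ i).add f hf g hg).symm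
  · intro c f hf
    refine tendsto_nhds_unique (hm _ (hX.smul_mem c f hf)) ?_
    have := (hm f hf).const_mul c
    refine this.congr fun i => ?_
    exact ((hμ i).smul c f hf).symm
  · intro f hf
    exact le_of_tendsto (hm f hf).norm
      (Filter.Eventually.of_forall fun i => (hμ i).norm_le f hf)
  · refine tendsto_nhds_unique (hm _ (hX.const_mem 1)) ?_
    refine tendsto_const_nhds.congr fun i => ?_
    exact ((hμ i).map_one).symm

/-- Step C: if the pointwise closure of the convex hull of the right orbit of `f`
contains the constant `c`, there is a mean `m` with `m (l_t f) = c` for all `t`. -/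
lemma exists_mean_const [Nonempty S] (hX : IsTransInvSubspace X) {f : S → ℂ} (hf : f ∈ X)
    {c : ℂ}
    (hc : (fun _ : S => c) ∈ closure (convexHull ℝ (Set.range fun s : S => rTrans s f))) :
    ∃ m : (S → ℂ) → ℂ, IsMeanOn X m ∧ ∀ t, m (lTrans t f) = c := by
  classical
  set Kc := convexHull ℝ (Set.range fun s : S => rTrans s f) with hKc
  have hne : (𝓝 (fun _ : S => c) ⊓ 𝓟 Kc).NeBot := mem_closure_iff_clusterPt.mp hc
  obtain ⟨𝒰, h𝒰⟩ := Ultrafilter.exists_le (𝓝 (fun _ : S => c) ⊓ 𝓟 Kc)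
  have hΦ : ∀ h : S → ℂ, ∃ ν : (S → ℂ) → ℂ,
      IsMeanOn X ν ∧ (h ∈ Kc → ∀ t, ν (lTrans t f) = h t) := by
    intro h
    by_cases hh : h ∈ Kc
    · obtain ⟨ν, h1, h2⟩ := exists_mean_of_mem_convexHull hX hh
      exact ⟨ν, h1, fun _ => h2⟩
    · exact ⟨fun g => g (Classical.arbitrary S), isMeanOn_delta hX _,
        fun h' => absurd h' hh⟩
  choose Φ hΦ1 hΦ2 using hΦ
  obtain ⟨m, hm, hlim⟩ := exists_limit_mean hX 𝒰 Φ hΦ1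
  refine ⟨m, hm, fun t => ?_⟩
  have h1 : Filter.Tendsto (fun h => Φ h (lTrans t f)) 𝒰 (𝓝 (m (lTrans t f))) :=
    hlim _ (hX.lTrans_mem t f hf)
  have h2 : Filter.Tendsto (fun h : S → ℂ => Φ h (lTrans t f)) 𝒰 (𝓝 c) := by
    have hKmem : Kc ∈ 𝒰 := by
      have : (𝒰 : Filter (S → ℂ)) ≤ 𝓟 Kc := h𝒰.trans inf_le_right
      exact Filter.le_principal_iff.mp this
    have hev : ∀ᶠ h in (𝒰 : Filter (S → ℂ)), Φ h (lTrans t f) = h t := by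
      filter_upwards [hKmem] with h hh using hΦ2 h hh t
    have h3 : Filter.Tendsto (fun h : S → ℂ => h t) 𝒰 (𝓝 c) := by
      have hcont : Filter.Tendsto (fun h : S → ℂ => h t)
          (𝓝 (fun _ : S => c)) (𝓝 c) := (continuous_apply t).tendsto _
      exact hcont.comp (le_trans h𝒰 inf_le_left)
    exact h3.congr' (hev.mono fun h e => e.symm)
  exact tendsto_nhds_unique h1 h2

/-- Step D: a mean making `T_m f` constant for each `f` in a finite subset of `X`. -/
lemma exists_mean_finset [Nonempty S] (hX : IsTransInvSubspace X)
    (hintro : IsLeftIntroverted X)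
    (hyp : ∀ f ∈ X, ∃ c : ℂ,
      (fun _ : S => c) ∈ closure (convexHull ℝ (Set.range fun s : S => rTrans s f)))
    (j : Finset {g : S → ℂ // g ∈ X}) :
    ∃ m : (S → ℂ) → ℂ, IsMeanOn X m ∧
      ∀ p ∈ j, ∃ c : ℂ, ∀ t, m (lTrans t p.val) = c := by
  classical
  induction j using Finset.induction_on with
  | empty =>
      exact ⟨fun g => g (Classical.arbitrary S), isMeanOn_delta hX _, by simp⟩
  | @insert p B hp ih =>
      obtain ⟨m₁, hm₁, hB⟩ := ih
      have hpX : p.val ∈ X := p.2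
      have hg0 : Tm m₁ p.val ∈ X := Tm_mem hintro hm₁ hpX
      obtain ⟨c, hc⟩ := hyp _ hg0
      obtain ⟨m₂, hm₂, hc2⟩ := exists_mean_const hX hg0 hc
      refine ⟨fun g => m₂ (Tm m₁ g), isMeanOn_comp hX hintro hm₁ hm₂, ?_⟩
      intro q hq
      rcases Finset.mem_insert.mp hq with rfl | hqB
      · refine ⟨c, fun t => ?_⟩
        show m₂ (Tm m₁ (lTrans t q.val)) = c
        rw [Tm_lTrans]
        exact hc2 t
      · obtain ⟨cq, hcq⟩ := hB q hqB
        refine ⟨cq, fun t => ?_⟩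
        show m₂ (Tm m₁ (lTrans t q.val)) = cq
        rw [Tm_lTrans]
        have hconst : lTrans t (Tm m₁ q.val) = fun _ : S => cq := by
          funext u
          show m₁ (lTrans (t * u) q.val) = cq
          exact hcq (t * u)
        rw [hconst, hm₂.const hX cq]

/-- The "if" direction: the orbit condition implies the existence of a LIM. -/
lemma hasLIM_of_const (hX : IsTransInvSubspace X) (hintro : IsLeftIntroverted X)
    (hyp : ∀ f ∈ X, ∃ c : ℂ,
      (fun _ : S => c) ∈ closure (convexHull ℝ (Set.range fun s : S => rTrans s f))) :
    HasLIM X := by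
  classical
  have hS : Nonempty S := by
    by_contra hcon
    haveI : IsEmpty S := not_nonempty_iff.mp hcon
    obtain ⟨c, hc⟩ := hyp (fun _ : S => 0) (hX.const_mem 0)
    rw [Set.range_eq_empty, convexHull_empty, closure_empty] at hc
    exact hc
  haveI := hS
  set P := {g : S → ℂ // g ∈ X}
  obtain ⟨𝒰, h𝒰⟩ := Ultrafilter.exists_le (Filter.atTop : Filter (Finset P))
  choose μ hμmean hμconst using fun j : Finset P => exists_mean_finset hX hintro hyp j
  obtain ⟨m, hm, hlim⟩ := exists_limit_mean hX 𝒰 μ hμmean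
  have key : ∀ f, ∀ hf : f ∈ X, ∀ s t : S, m (lTrans s f) = m (lTrans t f) := by
    intro f hf s t
    have hev : ∀ᶠ j in (𝒰 : Filter (Finset P)), μ j (lTrans s f) = μ j (lTrans t f) := by
      have hT : ∀ᶠ j in (Filter.atTop : Filter (Finset P)),
          ({⟨f, hf⟩} : Finset P) ≤ j := Filter.eventually_ge_atTop _
      filter_upwards [h𝒰 hT] with j hj
      have hmem : (⟨f, hf⟩ : P) ∈ j := Finset.singleton_subset_iff.mp hj
      obtain ⟨c, hc⟩ := hμconst j _ hmem
      rw [hc s, hc t]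
    exact tendsto_nhds_unique
      (((hlim _ (hX.lTrans_mem s f hf))).congr' hev) (hlim _ (hX.lTrans_mem t f hf))
  set s₀ : S := Classical.arbitrary S
  refine ⟨fun g => m (lTrans s₀ g), ?_, ?_, ?_, ?_, ?_⟩
  · intro f hf g hg
    rw [lTrans_add]
    exact hm.add _ (hX.lTrans_mem s₀ f hf) _ (hX.lTrans_mem s₀ g hg)
  · intro c f hf
    rw [lTrans_smul]
    exact hm.smul c _ (hX.lTrans_mem s₀ f hf)
  · intro f hf
    exact (hm.norm_le _ (hX.lTrans_mem s₀ f hf)).trans (supNorm_lTrans_le (hX.bdd f hf) s₀)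
  · rw [lTrans_const]
    exact hm.map_one
  · intro s f hf
    show m (lTrans s₀ (lTrans s f)) = m (lTrans s₀ f)
    rw [lTrans_lTrans]
    exact key f hf (s * s₀) s₀

end Construction

section Approx

variable {S : Type*} [Semigroup S] {X : Set (S → ℂ)}

/-- Step for the "only if" direction: a LIM value can be approximated, uniformly on any
finite set of points, by convex combinations of right translates. -/
lemma approx_of_mean [Nonempty S] (hX : IsTransInvSubspace X) {m : (S → ℂ) → ℂ}
    (hm : IsMeanOn X m) (hinv : ∀ s : S, ∀ f ∈ X, m (lTrans s f) = m f)
    {f : S → ℂ} (hf : f ∈ X) (I : Finset S) {ε : ℝ} (hε : 0 < ε) :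
    ∃ h ∈ convexHull ℝ (Set.range fun s : S => rTrans s f),
      ∀ t ∈ I, ‖h t - m f‖ < ε := by
  classical
  set K₀ := Set.range fun s : S => rTrans s f with hK₀
  rcases Finset.eq_empty_or_nonempty I with rfl | hIne
  · exact ⟨rTrans (Classical.arbitrary S) f,
      subset_convexHull ℝ K₀ (Set.mem_range_self _), by simp⟩
  haveI : Nonempty ↥I := hIne.coe_sort
  let P : (S → ℂ) →ₗ[ℝ] (↥I → ℂ) :=
    { toFun := fun h t => h t.val
      map_add' := fun _ _ => rfl
      map_smul' := fun _ _ => rfl }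
  set c : ℂ := m f with hc
  set v : ↥I → ℂ := fun _ => c with hv
  have hmem : v ∈ closure (P '' (convexHull ℝ K₀)) := by
    by_contra hvmem
    have hconv : Convex ℝ (closure (P '' (convexHull ℝ K₀))) :=
      ((convex_convexHull ℝ K₀).linear_image P).closure
    obtain ⟨φ, u, hlt, hφb⟩ :=
      geometric_hahn_banach_point_closed hconv isClosed_closure hvmem
    set lam : ↥I → ℂ := fun t =>
      ((φ (Pi.single t 1) : ℝ) : ℂ) - ((φ (Pi.single t Complex.I) : ℝ) : ℂ) * Complex.I
      with hlam
    have hφ : ∀ z : ↥I → ℂ, φ z = ∑ t : ↥I, (lam t * z t).re := by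
      intro z
      have hz : z = ∑ t : ↥I, Pi.single t (z t) := by
        funext u
        rw [Finset.sum_apply]
        rw [Fintype.sum_pi_single]
      conv_lhs => rw [hz]
      rw [map_sum]
      refine Finset.sum_congr rfl fun t _ => ?_
      have hsingle : Pi.single t (z t)
          = (z t).re • (Pi.single t (1 : ℂ) : ↥I → ℂ)
            + (z t).im • (Pi.single t Complex.I : ↥I → ℂ) := by
        funext u
        by_cases hu : u = t
        · subst hu
          simp only [Pi.add_apply, Pi.smul_apply, Pi.single_eq_same, Complex.real_smul,
            mul_one]
          exact (Complex.re_add_im (z u)).symm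
        · simp [Pi.single_eq_of_ne hu]
      rw [hsingle, map_add, map_smul, map_smul]
      simp only [smul_eq_mul, hlam, Complex.mul_re, Complex.sub_re, Complex.sub_im,
        Complex.mul_im, Complex.ofReal_re, Complex.ofReal_im, Complex.I_re, Complex.I_im]
      ring
    set g : S → ℂ := ∑ t : ↥I, lam t • lTrans t.val f with hg
    have hgX : g ∈ X :=
      sum_smul_mem hX Finset.univ _ _ fun t _ => hX.lTrans_mem t.val f hf
    have hgs : ∀ s : S, g s = ∑ t : ↥I, lam t * f (t.val * s) := by
      intro s
      rw [hg, Finset.sum_apply]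
      rfl
    have hmg : m g = (∑ t : ↥I, lam t) * c := by
      rw [hg, mean_sum hX hm Finset.univ _ _ fun t _ => hX.lTrans_mem t.val f hf,
        Finset.sum_mul]
      exact Finset.sum_congr rfl fun t _ => by rw [hinv t.val f hf]
    have hφv : φ v = (m g).re := by
      rw [hφ, hmg, Finset.sum_mul, Complex.re_sum]
    have horb : ∀ s : S, u < (g s).re := by
      intro s
      have hb : P (rTrans s f) ∈ closure (P '' convexHull ℝ K₀) :=
        subset_closure (Set.mem_image_of_mem _
          (subset_convexHull ℝ K₀ (Set.mem_range_self s)))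
      have h1 := hφb _ hb
      have heq : φ (P (rTrans s f)) = (g s).re := by
        rw [hφ, hgs, Complex.re_sum]
        rfl
      rwa [heq] at h1
    have hnegX : ((-1 : ℂ) • g) ∈ X := hX.smul_mem _ g hgX
    have hre : ∀ t, (((-1 : ℂ) • g) t).re ≤ -u := by
      intro t
      simp only [Pi.smul_apply, smul_eq_mul, neg_one_mul, Complex.neg_re]
      linarith [horb t]
    have hml := mean_re_le hX hm hnegX hre
    rw [hm.smul (-1) g hgX] at hml
    simp only [neg_one_mul, Complex.neg_re] at hml
    rw [hφv] at hlt
    linarith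
  rw [Metric.mem_closure_iff] at hmem
  obtain ⟨y, hy, hdist⟩ := hmem ε hε
  obtain ⟨h, hhconv, rfl⟩ := hy
  refine ⟨h, hhconv, fun t ht => ?_⟩
  have hcoord : ‖h t - c‖ ≤ ‖v - P h‖ := by
    have := norm_le_pi_norm (v - P h) ⟨t, ht⟩
    rw [norm_sub_rev]; exact this
  have : ‖v - P h‖ = dist v (P h) := (dist_eq_norm _ _).symm
  rw [this] at hcoord
  exact lt_of_le_of_lt hcoord hdist

end Approx

end GranirerLau

/-- Granirer–Lau, Theorem `Intr`: a left introverted norm-closed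
translation-invariant linear subspace `X` of `ℓ^∞(S)` containing the constants has a left
invariant mean if and only if for every `f ∈ X` the pointwise closure of the convex hull
of the right orbit `{r_s f : s ∈ S}` contains a constant function. -/
theorem hasLIM_iff_const_mem_pointwise_closure (S : Type*) [Semigroup S] [TopologicalSpace S]
    [T2Space S] [SemitopoSemigroup S]
    (X : Set (S → ℂ)) (hX : IsTransInvSubspace X) (hintro : IsLeftIntroverted X) :
    HasLIM X ↔
      ∀ f ∈ X, ∃ c : ℂ,
        (fun _ : S => c) ∈ closure (convexHull ℝ (Set.range fun s : S => rTrans s f)) := by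
  classical
  constructor
  · rintro ⟨m, hm⟩ f hf
    have hmean : GranirerLau.IsMeanOn X m := ⟨hm.add, hm.smul, hm.norm_le, hm.map_one⟩
    have hS : Nonempty S := by
      by_contra hcon
      haveI : IsEmpty S := not_nonempty_iff.mp hcon
      have h1 := hm.norm_le _ (hX.const_mem 1)
      rw [hm.map_one, supNorm, Real.iSup_of_isEmpty] at h1
      norm_num at h1
    haveI := hS
    refine ⟨m f, ?_⟩
    rw [mem_closure_iff]
    intro o ho hco
    obtain ⟨I, U, hU, hsub⟩ := isOpen_pi_iff.mp ho _ hco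
    have hball : ∀ a ∈ I, ∃ δ > 0, Metric.ball (m f) δ ⊆ U a := by
      intro a ha
      obtain ⟨h1, h2⟩ := hU a ha
      exact Metric.isOpen_iff.mp h1 _ h2
    choose! δ hδpos hδsub using hball
    rcases Finset.eq_empty_or_nonempty I with rfl | hIne
    · refine ⟨rTrans (Classical.arbitrary S) f, ?_,
        subset_convexHull ℝ _ (Set.mem_range_self _)⟩
      apply hsub
      simp [Set.mem_pi]
    · set ε := I.inf' hIne δ with hε
      have hεpos : 0 < ε := (Finset.lt_inf'_iff hIne).mpr fun a ha => hδpos a ha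
      obtain ⟨h, hhconv, happrox⟩ := GranirerLau.approx_of_mean hX hmean
        (fun s g hg => hm.left_inv s g hg) hf I hεpos
      refine ⟨h, hsub fun a ha => ?_, hhconv⟩
      apply hδsub a ha
      rw [Metric.mem_ball, dist_eq_norm]
      exact lt_of_lt_of_le (happrox a ha) (Finset.inf'_le δ ha)
  · exact GranirerLau.hasLIM_of_const hX hintro
end

section
/- Let S be a semitopological semigroup with an identity element, let f ∈ WAP(S), and let K_f denote the closure in the norm topology of C(S) of the convex hull of {r_s f : s ∈ S}. Then the action (s,g) ↦ r_s g of S on K_f is weakly quasi-equicontinuous; that is, if (s_α) is a net in S such that for every g ∈ K_f the net (r_{s_α} g) converges weakly in C(S) to T(g) ∈ K_f, then the map T : K_f → K_f is continuous when K_f carries the weak topology of C(S). -/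
open scoped BoundedContinuousFunction

/-!
Fix `φ ∈ C(S)*`. The functionals `φ ∘ r_{s_α}` have norm at most `‖φ‖`, so on the subspace of
`C(S)` where they converge pointwise their limit is a bounded linear functional, which
Hahn–Banach extends to some `Λ ∈ C(S)*`. On `K_f` the limit is `φ ∘ T`, so `φ ∘ T` agrees there
with the weakly continuous `Λ`; as `φ` is arbitrary, `T` is weakly continuous on `K_f`.
-/

open Filter Set Topology Bornology

namespace ContinuousLinearMap

variable {ι 𝕜 E F : Type*}

def tendstoSubmodule [Semiring 𝕜] [AddCommMonoid E] [Module 𝕜 E] [TopologicalSpace E]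
    [AddCommMonoid F] [Module 𝕜 F] [TopologicalSpace F] [ContinuousAdd F]
    [ContinuousConstSMul 𝕜 F] (l : Filter ι) (A : ι → E →L[𝕜] F) : Submodule 𝕜 E where
  carrier := {x | ∃ y, Tendsto (fun i => A i x) l (𝓝 y)}
  add_mem' := fun ⟨y, hy⟩ ⟨z, hz⟩ => ⟨y + z, by simpa using hy.add hz⟩
  zero_mem' := ⟨0, by simpa using tendsto_const_nhds⟩
  smul_mem' := fun c _ ⟨y, hy⟩ => ⟨c • y, by simpa using hy.const_smul c⟩

variable [NontriviallyNormedField 𝕜] [SeminormedAddCommGroup E] [NormedSpace 𝕜 E]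
  [NormedAddCommGroup F] [NormedSpace 𝕜 F]

theorem exists_tendsto_on_tendstoSubmodule {l : Filter ι} [l.NeBot] {A : ι → E →L[𝕜] F}
    (hA : IsBounded (range A)) :
    ∃ B : tendstoSubmodule l A →L[𝕜] F,
      ∀ x : tendstoSubmodule l A, Tendsto (fun i => A i x) l (𝓝 (B x)) := by
  set V := tendstoSubmodule l A
  have hlim : ∀ x : V, Tendsto (fun i => A i x) l (𝓝 (limUnder l fun i => A i x)) :=
    fun x => tendsto_nhds_limUnder x.2
  have hbdd : IsBounded (range fun i => (A i).comp V.subtypeL) := by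
    have := ((compL 𝕜 V E F).flip V.subtypeL).lipschitz.isBounded_image hA
    rwa [← range_comp] at this
  exact ⟨ofTendstoOfBoundedRange _ _ (tendsto_pi_nhds.2 hlim) hbdd, hlim⟩

end ContinuousLinearMap

namespace StrongDual

theorem exists_eqOn_of_tendsto {ι 𝕜 E : Type*} [RCLike 𝕜] [SeminormedAddCommGroup E]
    [NormedSpace 𝕜 E] {l : Filter ι} [l.NeBot] {ψ : ι → StrongDual 𝕜 E}
    (hψ : IsBounded (range ψ)) {K : Set E} {f : E → 𝕜}
    (hf : ∀ x ∈ K, Tendsto (fun i => ψ i x) l (𝓝 (f x))) :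
    ∃ Λ : StrongDual 𝕜 E, EqOn f Λ K := by
  obtain ⟨B, hB⟩ := ContinuousLinearMap.exists_tendsto_on_tendstoSubmodule (l := l) hψ
  obtain ⟨Λ, hΛ, -⟩ := exists_extension_norm_eq _ B
  refine ⟨Λ, fun x hx => ?_⟩
  have hxV : x ∈ ContinuousLinearMap.tendstoSubmodule l ψ := ⟨f x, hf x hx⟩
  rw [hΛ ⟨x, hxV⟩]
  exact tendsto_nhds_unique (hf x hx) (hB ⟨x, hxV⟩)

variable {𝕜 E : Type*} [NontriviallyNormedField 𝕜] [NormedAddCommGroup E] [NormedSpace 𝕜 E]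

theorem continuous_weakTop (φ : StrongDual 𝕜 E) : Continuous[weakTop 𝕜 E, _] φ :=
  continuous_iInf_dom continuous_induced_dom

theorem continuousOn_weakTop_of_forall_eqOn {T : E → E} {K : Set E}
    (hT : ∀ φ : StrongDual 𝕜 E, ∃ Λ : StrongDual 𝕜 E, EqOn (φ ∘ T) Λ K) :
    @ContinuousOn _ _ (weakTop 𝕜 E) (weakTop 𝕜 E) T K := by
  let _ := weakTop 𝕜 E
  rw [continuousOn_iff_continuous_domRestrict]
  refine continuous_iInf_rng.2 fun φ => continuous_induced_rng.2 ?_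
  obtain ⟨Λ, hΛ⟩ := hT φ
  convert Λ.continuous_weakTop.comp continuous_subtype_val using 1
  exact funext fun x => hΛ x.2

end StrongDual

section RightTranslation

variable {S : Type*} [Semigroup S] [TopologicalSpace S] [SemitopoSemigroup S]

-- Definitionally equal to `rTransB s`.
noncomputable def rTransCLM (s : S) : (S →ᵇ ℂ) →L[ℂ] S →ᵇ ℂ :=
  BoundedContinuousFunction.compContinuousCLM ℂ ℂ ⟨fun t => t * s, SemitopoSemigroup.cont_right s⟩

theorem norm_rTransCLM_le (s : S) : ‖rTransCLM s‖ ≤ 1 :=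
  (rTransCLM s).opNorm_le_bound zero_le_one fun g => by
    rw [one_mul]; exact BoundedContinuousFunction.norm_compContinuous_le g _

end RightTranslation

theorem wap_right_orbit_action_quasi_equicontinuous_general (S : Type*) [Monoid S]
    [TopologicalSpace S] [SemitopoSemigroup S]
    (Kf : Set (S →ᵇ ℂ))
    (ι : Type*) (l : Filter ι) (hl : l.NeBot) (sα : ι → S)
    (T : (S →ᵇ ℂ) → (S →ᵇ ℂ))
    (hconv : ∀ g ∈ Kf, Filter.Tendsto (fun i => rTransB (sα i) g) l
      (@nhds _ (weakTop ℂ (S →ᵇ ℂ)) (T g))) :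
    @ContinuousOn _ _ (weakTop ℂ (S →ᵇ ℂ)) (weakTop ℂ (S →ᵇ ℂ)) T Kf := by
  refine StrongDual.continuousOn_weakTop_of_forall_eqOn fun φ => ?_
  have hbdd : IsBounded (range fun i => φ.comp (rTransCLM (sα i))) :=
    isBounded_iff_forall_norm_le.2 ⟨‖φ‖, forall_mem_range.2 fun i =>
      (φ.opNorm_comp_le _).trans (mul_le_of_le_one_right (norm_nonneg φ) (norm_rTransCLM_le _))⟩
  have := hl
  exact StrongDual.exists_eqOn_of_tendsto hbdd fun g hg =>
    (@Continuous.tendsto _ _ (weakTop ℂ _) _ _ φ.continuous_weakTop (T g)).comp (hconv g hg)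

/-- for a semitopological semigroup `S` with identity and `f ∈ WAP(S)`,
the action `(s, g) ↦ r_s g` of `S` on `K_f` (the norm closure of the convex hull of the
right orbit of `f` in `C(S)`) is weakly quasi-equicontinuous: if `(s_α)` is a net in `S`
such that `r_{s_α} g` converges weakly to `T g ∈ K_f` for every `g ∈ K_f`, then
`T : K_f → K_f` is weakly continuous. -/
theorem wap_right_orbit_action_quasi_equicontinuous (S : Type*) [Monoid S]
    [TopologicalSpace S] [T2Space S] [SemitopoSemigroup S] (F : S →ᵇ ℂ) (hF : IsWAPb F)
    (Kf : Set (S →ᵇ ℂ))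
    (hKf : Kf = closure (convexHull ℝ (Set.range fun s : S => rTransB s F)))
    (ι : Type*) (l : Filter ι) (hl : l.NeBot) (sα : ι → S)
    (T : (S →ᵇ ℂ) → (S →ᵇ ℂ)) (hT : ∀ g ∈ Kf, T g ∈ Kf)
    (hconv : ∀ g ∈ Kf, Filter.Tendsto (fun i => rTransB (sα i) g) l
      (@nhds _ (weakTop ℂ (S →ᵇ ℂ)) (T g))) :
    @ContinuousOn _ _ (weakTop ℂ (S →ᵇ ℂ)) (weakTop ℂ (S →ᵇ ℂ)) T Kf :=
  wap_right_orbit_action_quasi_equicontinuous_general S Kf ι l hl sα T hconv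
end
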